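/- arXiv:2210.09438 — 7 statements merged into one kernel-verified Lean document; each statement's English description precedes it below -/
import Mathlib

section
/- Let V be a finite-dimensional real vector space, W a real vector space with a symmetric bilinear form, and φ : V × V → W a bilinear form. Then the set of regular elements of φ, i.e., the set of X ∈ V with dim φ_X(V) maximal, is an open dense subset of V. -/
/-!
If some `n × n` matrix `(gᵢ (φ_X vⱼ))`, with `vⱼ ∈ V` and `gᵢ` linear functionals on `W`, is
invertible, then `rank φ_X ≥ n`; conversely for `n = rank φ_X` it can be made the identity.
Such a determinant is continuous in `X`, so the rank is lower semicontinuous and the regular set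
is open. For density, fix a regular `X₀` with its identity matrix: at `X + t X₀` the same matrix
is `A + t • 1`, whose determinant is a monic polynomial in `t`, hence nonzero for all but finitely
many `t`; so `X + t X₀` is regular for all small `t ≠ 0`.
-/

open Module Filter Topology

theorem Matrix.eventually_cofinite_det_add_smul_one_ne_zero {K n : Type*} [CommRing K]
    [IsDomain K] [Fintype n] [DecidableEq n] (A : Matrix n n K) :
    ∀ᶠ t : K in cofinite, (A + t • (1 : Matrix n n K)).det ≠ 0 := by
  refine (Polynomial.finite_setOfPred_isRoot
    (-A).charpoly_monic.ne_zero).eventually_cofinite_notMem.mono fun t ht => ?_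
  rwa [Set.mem_ofPred_eq, Polynomial.IsRoot, Matrix.eval_charpoly, Matrix.scalar_apply,
    sub_neg_eq_add, add_comm, ← Matrix.smul_one_eq_diagonal] at ht

section Algebraic

variable {K V E W : Type*} [Field K] [AddCommGroup V] [Module K V] [AddCommGroup E] [Module K E]
  [FiniteDimensional K E] [AddCommGroup W] [Module K W]

theorem LinearMap.le_finrank_range_of_det_ne_zero (f : E →ₗ[K] W) {n : ℕ} (v : Fin n → E)
    (g : Fin n → Dual K W) (hdet : (Matrix.of fun i j => g i (f (v j))).det ≠ 0) :
    n ≤ finrank K (LinearMap.range f) := by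
  have hcols : LinearIndependent K fun j => LinearMap.pi g (f (v j)) :=
    Matrix.linearIndependent_cols_of_det_ne_zero hdet
  have hrange : LinearIndependent K
      fun j => (⟨f (v j), f.mem_range_self _⟩ : LinearMap.range f) :=
    (hcols.of_comp _).of_comp (LinearMap.range f).subtype
  simpa using hrange.fintype_card_le_finrank

theorem LinearMap.exists_minor_eq_one (f : E →ₗ[K] W) :
    ∃ (v : Fin (finrank K (LinearMap.range f)) → E)
      (g : Fin (finrank K (LinearMap.range f)) → Dual K W),
      (Matrix.of fun i j => g i (f (v j))) = 1 := by
  let b := Module.finBasis K (LinearMap.range f)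
  choose v hv using fun j => (b j).2
  choose g hg using fun i => LinearMap.exists_extend (b.coord i)
  refine ⟨v, g, Matrix.ext fun i j => ?_⟩
  have hcoord : g i (f (v j)) = b.coord i (b j) := by
    rw [← hg i, LinearMap.comp_apply, Submodule.subtype_apply, hv]
  simp [hcoord, Matrix.one_apply, Finsupp.single_apply, eq_comm]

theorem LinearMap.eventually_cofinite_finrank_range_le_add_smul (φ : V →ₗ[K] E →ₗ[K] W)
    (X X₀ : V) :
    ∀ᶠ t : K in cofinite,
      finrank K (LinearMap.range (φ X₀)) ≤ finrank K (LinearMap.range (φ (X + t • X₀))) := by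
  obtain ⟨v, g, hvg⟩ := (φ X₀).exists_minor_eq_one
  filter_upwards
    [(Matrix.of fun i j => g i (φ X (v j))).eventually_cofinite_det_add_smul_one_ne_zero] with t ht
  refine (φ (X + t • X₀)).le_finrank_range_of_det_ne_zero v g ?_
  convert ht using 2
  ext i j
  simp [← hvg]

def regularSet (φ : V →ₗ[K] E →ₗ[K] W) : Set V :=
  {X | ∀ Z, finrank K (LinearMap.range (φ Z)) ≤ finrank K (LinearMap.range (φ X))}

theorem exists_mem_regularSet (φ : V →ₗ[K] E →ₗ[K] W) : ∃ X, X ∈ regularSet φ := by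
  have hbdd : BddAbove (Set.range fun X => finrank K (LinearMap.range (φ X))) :=
    ⟨finrank K E, Set.forall_mem_range.2 fun X => (φ X).finrank_range_le⟩
  obtain ⟨X, hX⟩ := Nat.sSup_mem (Set.range_nonempty _) hbdd
  exact ⟨X, fun Z => (le_csSup hbdd ⟨Z, rfl⟩).trans_eq hX.symm⟩

end Algebraic

section Topological

variable {𝕜 V E W : Type*} [NontriviallyNormedField 𝕜] [AddCommGroup V] [Module 𝕜 V]
  [TopologicalSpace V] [AddCommGroup E] [Module 𝕜 E] [FiniteDimensional 𝕜 E]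
  [AddCommGroup W] [Module 𝕜 W]

theorem eventually_finrank_range_le [IsTopologicalAddGroup V] [ContinuousSMul 𝕜 V] [T2Space V]
    [CompleteSpace 𝕜] [FiniteDimensional 𝕜 V] (φ : V →ₗ[𝕜] E →ₗ[𝕜] W) (X : V) :
    ∀ᶠ Y in 𝓝 X, finrank 𝕜 (LinearMap.range (φ X)) ≤ finrank 𝕜 (LinearMap.range (φ Y)) := by
  obtain ⟨v, g, hvg⟩ := (φ X).exists_minor_eq_one
  have hcont : Continuous fun Y => (Matrix.of fun i j => g i (φ Y (v j))).det :=
    .matrix_det <| continuous_matrix fun i j =>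
      LinearMap.continuous_of_finiteDimensional ((g i).comp (φ.flip (v j)))
  filter_upwards [hcont.continuousAt.eventually_ne (show _ ≠ (0 : 𝕜) by simp [hvg])] with Y hY
  exact (φ Y).le_finrank_range_of_det_ne_zero v g hY

theorem isOpen_regularSet [IsTopologicalAddGroup V] [ContinuousSMul 𝕜 V] [T2Space V]
    [CompleteSpace 𝕜] [FiniteDimensional 𝕜 V] (φ : V →ₗ[𝕜] E →ₗ[𝕜] W) :
    IsOpen (regularSet φ) :=
  isOpen_iff_mem_nhds.2 fun X hX => (eventually_finrank_range_le φ X).mono fun _ hY Z =>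
    (hX Z).trans hY

theorem dense_regularSet [ContinuousAdd V] [ContinuousSMul 𝕜 V] (φ : V →ₗ[𝕜] E →ₗ[𝕜] W) :
    Dense (regularSet φ) := by
  obtain ⟨X₀, hX₀⟩ := exists_mem_regularSet φ
  refine fun X => mem_closure_of_tendsto (b := 𝓝[≠] (0 : 𝕜)) (f := fun t => X + t • X₀) ?_ ?_
  · exact tendsto_nhdsWithin_of_tendsto_nhds <|
      (by fun_prop : Continuous fun t : 𝕜 => X + t • X₀).tendsto' 0 X (by simp)
  · filter_upwards [(φ.eventually_cofinite_finrank_range_le_add_smul X X₀).filter_mono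
      (nhdsNE_le_cofinite 0)] with t ht Z
    exact (hX₀ Z).trans ht

end Topological

theorem stmt_2_general (V W : Type*) [NormedAddCommGroup V] [NormedSpace ℝ V] [FiniteDimensional ℝ V]
    [AddCommGroup W] [Module ℝ W]
    (φ : V →ₗ[ℝ] V →ₗ[ℝ] W) :
    IsOpen {X : V | ∀ Z : V, Module.finrank ℝ (LinearMap.range (φ Z)) ≤
        Module.finrank ℝ (LinearMap.range (φ X))} ∧
    Dense {X : V | ∀ Z : V, Module.finrank ℝ (LinearMap.range (φ Z)) ≤
        Module.finrank ℝ (LinearMap.range (φ X))} :=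
  ⟨isOpen_regularSet φ, dense_regularSet φ⟩

/-- The set of regular elements of a bilinear form φ : V × V → W is open and dense. -/
theorem stmt_2 (V W : Type*) [NormedAddCommGroup V] [NormedSpace ℝ V] [FiniteDimensional ℝ V]
    [AddCommGroup W] [Module ℝ W]
    (B : LinearMap.BilinForm ℝ W) (hsymm : B.IsSymm)
    (φ : V →ₗ[ℝ] V →ₗ[ℝ] W) :
    IsOpen {X : V | ∀ Z : V, Module.finrank ℝ (LinearMap.range (φ Z)) ≤
        Module.finrank ℝ (LinearMap.range (φ X))} ∧
    Dense {X : V | ∀ Z : V, Module.finrank ℝ (LinearMap.range (φ Z)) ≤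
        Module.finrank ℝ (LinearMap.range (φ X))} :=
  stmt_2_general V W φ
end

section
/- Let β : V × V → L ⊕ L be defined from a symmetric bilinear form α : V × V → L by β(X,Y) = (α(X,Y)+α(JX,JY), α(X,JY)−α(JX,Y)), where J is a complex structure on V. Let U₀ = π₁(S(β)) be the projection onto the first factor of the span S(β) of the image of β. Then S(β) = U₀ ⊕ U₀ (as a subspace of L ⊕ L). -/
/-- S(β) = U₀ ⊕ U₀ where U₀ = π₁(S(β)). -/
theorem stmt_5 (V L : Type*) [AddCommGroup V] [Module ℝ V] [AddCommGroup L] [Module ℝ L]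
    (J : V →ₗ[ℝ] V) (hJ : J ∘ₗ J = -LinearMap.id)
    (α : V →ₗ[ℝ] V →ₗ[ℝ] L) (hαsymm : ∀ X Y : V, α X Y = α Y X)
    (β : V →ₗ[ℝ] V →ₗ[ℝ] L × L)
    (hβ : ∀ X Y : V, β X Y = (α X Y + α (J X) (J Y), α X (J Y) - α (J X) Y))
    (Sβ : Submodule ℝ (L × L))
    (hSβ : Sβ = Submodule.span ℝ {z : L × L | ∃ X Y : V, z = β X Y}) :
    Sβ = (Submodule.map (LinearMap.fst ℝ L L) Sβ).prod
      (Submodule.map (LinearMap.fst ℝ L L) Sβ) := by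
  have hJJ : ∀ Y : V, J (J Y) = -Y := by
    intro Y
    have := congrArg (fun f => f Y) hJ
    simpa using this
  have hmemβ : ∀ X Y : V, β X Y ∈ Sβ := by
    intro X Y
    rw [hSβ]
    exact Submodule.subset_span ⟨X, Y, rfl⟩
  -- (a(X,Y), 0) ∈ Sβ
  have h1 : ∀ X Y : V, ((α X Y + α (J X) (J Y), (0 : L)) : L × L) ∈ Sβ := by
    intro X Y
    have hmem : β X Y + β Y X ∈ Sβ := add_mem (hmemβ X Y) (hmemβ Y X)
    have hval : β X Y + β Y X = (2 : ℝ) • ((α X Y + α (J X) (J Y), (0 : L)) : L × L) := by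
      rw [hβ, hβ]
      have e1 := hαsymm X Y
      have e2 := hαsymm (J X) (J Y)
      have e3 := hαsymm X (J Y)
      have e4 := hαsymm (J X) Y
      ext
      · simp only [Prod.fst_add, Prod.smul_fst, smul_eq_mul, two_smul]
        rw [e1, e2]; try abel
      · simp only [Prod.snd_add, Prod.smul_snd, smul_zero]
        rw [e3, e4]; abel
    have := Sβ.smul_mem ((2 : ℝ)⁻¹) (hval ▸ hmem)
    simpa [smul_smul] using this
  -- (0, a(X,Y)) ∈ Sβ
  have h2 : ∀ X Y : V, (((0 : L), α X Y + α (J X) (J Y)) : L × L) ∈ Sβ := by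
    intro X Y
    have hb : ((α X (J Y) - α (J X) Y, (0 : L)) : L × L) ∈ Sβ := by
      have := h1 X (J Y)
      rw [hJJ Y] at this
      simpa [sub_eq_add_neg] using this
    have hmem : ((α X (J Y) - α (J X) Y, (0 : L)) : L × L) - β X (J Y) ∈ Sβ :=
      sub_mem hb (hmemβ X (J Y))
    have hval : ((α X (J Y) - α (J X) Y, (0 : L)) : L × L) - β X (J Y)
        = (((0 : L), α X Y + α (J X) (J Y)) : L × L) := by
      rw [hβ, hJJ Y]
      ext
      · simp [map_neg]; abel
      · simp [map_neg]; abel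
    rw [hval] at hmem
    exact hmem
  apply le_antisymm
  · rw [hSβ]
    apply Submodule.span_le.2
    rintro z ⟨X, Y, rfl⟩
    refine ⟨⟨β X Y, by rw [← hSβ]; exact hmemβ X Y, rfl⟩, ⟨β X (J Y), by rw [← hSβ]; exact hmemβ X (J Y), ?_⟩⟩
    rw [hβ, hβ, hJJ Y]
    simp [sub_eq_add_neg]
  · rintro ⟨u, v⟩ ⟨hu, hv⟩
    obtain ⟨s, hs, rfl⟩ := hu
    obtain ⟨t, ht, rfl⟩ := hv
    -- projections into Sβ
    set P : L × L →ₗ[ℝ] L × L := (LinearMap.inl ℝ L L) ∘ₗ (LinearMap.fst ℝ L L) with hP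
    set Q : L × L →ₗ[ℝ] L × L := (LinearMap.inr ℝ L L) ∘ₗ (LinearMap.fst ℝ L L) with hQ
    have hPS : Submodule.map P Sβ ≤ Sβ := by
      conv_lhs => rw [hSβ]
      rw [Submodule.map_span]
      apply Submodule.span_le.2
      rintro z ⟨w, ⟨X, Y, rfl⟩, rfl⟩
      have := h1 X Y
      simpa [hP, hβ] using this
    have hQS : Submodule.map Q Sβ ≤ Sβ := by
      conv_lhs => rw [hSβ]
      rw [Submodule.map_span]
      apply Submodule.span_le.2
      rintro z ⟨w, ⟨X, Y, rfl⟩, rfl⟩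
      have := h2 X Y
      simpa [hQ, hβ] using this
    have h3 : P s + Q t ∈ Sβ :=
      add_mem (hPS ⟨s, hs, rfl⟩) (hQS ⟨t, ht, rfl⟩)
    simpa [hP, hQ] using h3
end

section
/- Let β : V × V → L ⊕ L be defined from a symmetric bilinear form α : V × V → L^p (L^p Lorentzian of dimension p) by β(X,Y) = (α(X,Y)+α(JX,JY), α(X,JY)−α(JX,Y)), and endow L ⊕ L with the form ⟨⟨(ξ,ξ̄),(η,η̄)⟩⟩ = ⟨ξ,η⟩ − ⟨ξ̄,η̄⟩. If S(β) ≠ 0 and the subspace S(β) is degenerate, then 1 ≤ dim π₁(S(β)) ≤ p−1, and there exists a nonzero light-like vector v ∈ π₁(S(β)) such that S(β) ∩ (S(β))^⊥ = span{v} ⊕ span{v}. -/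
/-! The maps `(ξ, ξ̄) ↦ (-ξ̄, ξ)` and `(ξ, ξ̄) ↦ (ξ, -ξ̄)` are self-adjoint for `⟨⟨·,·⟩⟩` and send
`β(X,Y)` to `β(JX,Y)` and `β(Y,X)`. Hence they preserve `S(β)`, `S(β)^⊥` and the radical
`N = S(β) ∩ S(β)^⊥`, which forces `N = M ⊕ M` with `M = {ξ | (ξ,0) ∈ N}`. Now `M` is totally isotropic
in `L^p`, and in a Lorentzian space a totally isotropic subspace is at most a line, so `M = span{v}`
with `v` light-like. Finally `π₁(S(β))` is orthogonal to `v`, and `v^⊥` is a hyperplane because a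
light-like vector is never orthogonal to a time-like one. -/

open LinearMap (BilinForm)
open Module (finrank)
open Submodule (span)

section Lorentzian

variable {K L : Type*} [Field K] [Preorder K]
  [AddCommGroup L] [Module K L] {B : BilinForm K L} {w : L}

theorem eq_zero_of_isotropic_of_apply_eq_zero (hw : ∀ x, B x w = 0 → x ≠ 0 → 0 < B x x)
    {x : L} (hxw : B x w = 0) (hxx : B x x = 0) : x = 0 := by
  by_contra hx
  exact (hw x hxw hx).ne' hxx

theorem apply_ne_zero_of_isotropic (hw : ∀ x, B x w = 0 → x ≠ 0 → 0 < B x x)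
    {u : L} (huu : B u u = 0) (hu : u ≠ 0) : B u w ≠ 0 :=
  fun h ↦ hu (eq_zero_of_isotropic_of_apply_eq_zero hw h huu)

theorem mem_span_singleton_of_isotropic (hB : B.IsSymm)
    (hw : ∀ x, B x w = 0 → x ≠ 0 → 0 < B x x) {u x : L} (huu : B u u = 0) (hu : u ≠ 0)
    (hxx : B x x = 0) (hux : B u x = 0) : x ∈ K ∙ u := by
  set a := B u w
  set b := B x w
  have ha : a ≠ 0 := apply_ne_zero_of_isotropic hw huu hu
  -- `a • x - b • u` is isotropic and orthogonal to `w`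
  have hab : a • x - b • u = 0 := by
    have hxu : B x u = 0 := by rw [hB.eq]; exact hux
    apply eq_zero_of_isotropic_of_apply_eq_zero hw
    · simp only [map_sub, map_smul, LinearMap.sub_apply, LinearMap.smul_apply, smul_eq_mul, a, b]
      ring
    · simp [huu, hxx, hux, hxu]
  refine Submodule.mem_span_singleton.mpr ⟨a⁻¹ * b, ?_⟩
  rw [mul_smul, ← sub_eq_zero.mp hab, smul_smul, inv_mul_cancel₀ ha, one_smul]

theorem eq_span_singleton_of_totally_isotropic (hB : B.IsSymm)
    (hw : ∀ x, B x w = 0 → x ≠ 0 → 0 < B x x) {M : Submodule K L}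
    (hM : ∀ x ∈ M, ∀ y ∈ M, B x y = 0) {v : L} (hv : v ∈ M) (hv0 : v ≠ 0) : M = K ∙ v :=
  le_antisymm
    (fun x hx ↦ mem_span_singleton_of_isotropic hB hw (hM v hv v hv) hv0 (hM x hx x hx)
      (hM v hv x hx))
    ((Submodule.span_singleton_le_iff_mem _ _).mpr hv)

theorem finrank_lt_of_isotropic_of_forall_apply_eq_zero [FiniteDimensional K L] (hB : B.IsSymm)
    (hw : ∀ x, B x w = 0 → x ≠ 0 → 0 < B x x) {v : L} (hvv : B v v = 0) (hv : v ≠ 0)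
    {U : Submodule K L} (hU : ∀ x ∈ U, B x v = 0) : finrank K U < finrank K L := by
  have hf : B.flip v ≠ 0 := fun h ↦ apply_ne_zero_of_isotropic hw hvv hv <| by
    rw [hB.eq]; exact LinearMap.congr_fun h w
  have hUker : U ≤ LinearMap.ker (B.flip v) := hU
  have := Module.Dual.finrank_ker_add_one_of_ne_zero hf
  have := Submodule.finrank_mono hUker
  omega

end Lorentzian

section Hyperbolic

variable (R : Type*) {L : Type*} [CommRing R] [AddCommGroup L] [Module R L]

def prodRot : L × L →ₗ[R] L × L := (-LinearMap.snd R L L).prod (LinearMap.fst R L L)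

def prodConj : L × L →ₗ[R] L × L := (LinearMap.fst R L L).prod (-LinearMap.snd R L L)

@[simp] theorem prodRot_apply (z : L × L) : prodRot R z = (-z.2, z.1) := rfl

@[simp] theorem prodConj_apply (z : L × L) : prodConj R z = (z.1, -z.2) := rfl

variable {R} {BL : BilinForm R L} {Bw : BilinForm R (L × L)}

theorem isAdjointPair_prodRot (hBw : ∀ a b, Bw a b = BL a.1 b.1 - BL a.2 b.2) :
    LinearMap.IsAdjointPair Bw Bw (prodRot R) (prodRot R) := by
  intro x y
  simp only [hBw, prodRot_apply, map_neg, LinearMap.neg_apply]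
  ring

theorem isAdjointPair_prodConj (hBw : ∀ a b, Bw a b = BL a.1 b.1 - BL a.2 b.2) :
    LinearMap.IsAdjointPair Bw Bw (prodConj R) (prodConj R) := by
  intro x y
  simp only [hBw, prodConj_apply, map_neg, LinearMap.neg_apply]

end Hyperbolic

theorem inf_orthogonal_le_comap {R M : Type*} [CommSemiring R] [AddCommMonoid M] [Module R M]
    {B : BilinForm R M} {T : M →ₗ[R] M} (hT : LinearMap.IsAdjointPair B B T T)
    {S : Submodule R M} (hS : S ≤ S.comap T) :
    S ⊓ B.orthogonal S ≤ (S ⊓ B.orthogonal S).comap T :=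
  fun z hz ↦ ⟨hS hz.1, fun s hs ↦ by rw [← hT]; exact hz.2 _ (hS hs)⟩

theorem eq_prod_comap_inl_of_le_comap {K L : Type*} [Field K] [AddCommGroup L] [Module K L]
    (h2 : (2 : K) ≠ 0) {N : Submodule K (L × L)} (hrot : N ≤ N.comap (prodRot K))
    (hconj : N ≤ N.comap (prodConj K)) :
    N = (N.comap (LinearMap.inl K L L)).prod (N.comap (LinearMap.inl K L L)) := by
  have hfst : ∀ z ∈ N, (z.1, (0 : L)) ∈ N := by
    intro z hz
    have : (2 : K)⁻¹ • (z + prodConj K z) = (z.1, 0) := by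
      ext
      · simp [← two_smul K, smul_smul, mul_inv_cancel₀ h2]
      · simp
    exact this ▸ N.smul_mem _ (N.add_mem hz (hconj hz))
  ext z
  simp only [Submodule.mem_prod, Submodule.mem_comap, LinearMap.inl_apply]
  constructor
  · intro hz
    refine ⟨hfst z hz, ?_⟩
    simpa using N.neg_mem (hfst _ (hrot hz))
  · rintro ⟨h1, h2⟩
    have h2' : ((0 : L), z.2) ∈ N := by simpa using hrot h2
    simpa using N.add_mem h1 h2'

section Beta

variable {R V L : Type*} [CommRing R] [AddCommGroup V] [Module R V] [AddCommGroup L] [Module R L]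
  {J : V →ₗ[R] V} {α : V →ₗ[R] V →ₗ[R] L} {β : V →ₗ[R] V →ₗ[R] L × L}

theorem prodRot_beta (hJ : J ∘ₗ J = -LinearMap.id)
    (hβ : ∀ X Y, β X Y = (α X Y + α (J X) (J Y), α X (J Y) - α (J X) Y)) (X Y : V) :
    prodRot R (β X Y) = β (J X) Y := by
  have hJJ : J (J X) = -X := by simpa using LinearMap.congr_fun hJ X
  rw [hβ, hβ, prodRot_apply, hJJ]
  ext <;> simp only [map_neg, LinearMap.neg_apply] <;> abel

theorem prodConj_beta (hα : ∀ X Y, α X Y = α Y X)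
    (hβ : ∀ X Y, β X Y = (α X Y + α (J X) (J Y), α X (J Y) - α (J X) Y)) (X Y : V) :
    prodConj R (β X Y) = β Y X := by
  rw [hβ, hβ, prodConj_apply, hα X, hα (J X), hα X (J Y), hα (J X) Y]
  ext <;> simp only [neg_sub]

theorem span_beta_le_comap_prodRot (hJ : J ∘ₗ J = -LinearMap.id)
    (hβ : ∀ X Y, β X Y = (α X Y + α (J X) (J Y), α X (J Y) - α (J X) Y)) :
    span R {z | ∃ X Y, z = β X Y} ≤ (span R {z | ∃ X Y, z = β X Y}).comap (prodRot R) :=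
  Submodule.span_le.mpr <| by
    rintro _ ⟨X, Y, rfl⟩
    exact Submodule.subset_span ⟨J X, Y, prodRot_beta hJ hβ X Y⟩

theorem span_beta_le_comap_prodConj (hα : ∀ X Y, α X Y = α Y X)
    (hβ : ∀ X Y, β X Y = (α X Y + α (J X) (J Y), α X (J Y) - α (J X) Y)) :
    span R {z | ∃ X Y, z = β X Y} ≤ (span R {z | ∃ X Y, z = β X Y}).comap (prodConj R) :=
  Submodule.span_le.mpr <| by
    rintro _ ⟨X, Y, rfl⟩
    exact Submodule.subset_span ⟨Y, X, prodConj_beta hα hβ X Y⟩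

end Beta

theorem stmt_6_general (p : ℕ) (V L : Type*) [AddCommGroup V] [Module ℝ V]
    [AddCommGroup L] [Module ℝ L] [FiniteDimensional ℝ L]
    (hdL : Module.finrank ℝ L = p)
    (BL : LinearMap.BilinForm ℝ L) (hLsymm : BL.IsSymm)
    (hLor : ∃ w : L, BL w w = -1 ∧ ∀ x : L, BL x w = 0 → x ≠ 0 → 0 < BL x x)
    (J : V →ₗ[ℝ] V) (hJ : J ∘ₗ J = -LinearMap.id)
    (α : V →ₗ[ℝ] V →ₗ[ℝ] L) (hαsymm : ∀ X Y : V, α X Y = α Y X)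
    (β : V →ₗ[ℝ] V →ₗ[ℝ] L × L)
    (hβ : ∀ X Y : V, β X Y = (α X Y + α (J X) (J Y), α X (J Y) - α (J X) Y))
    (Bw : LinearMap.BilinForm ℝ (L × L))
    (hBw : ∀ a b : L × L, Bw a b = BL a.1 b.1 - BL a.2 b.2)
    (Sβ : Submodule ℝ (L × L))
    (hSβ : Sβ = Submodule.span ℝ {z : L × L | ∃ X Y : V, z = β X Y})
    (hdeg : Sβ ⊓ Bw.orthogonal Sβ ≠ ⊥) :
    (1 ≤ Module.finrank ℝ (Submodule.map (LinearMap.fst ℝ L L) Sβ) ∧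
      Module.finrank ℝ (Submodule.map (LinearMap.fst ℝ L L) Sβ) ≤ p - 1) ∧
    ∃ v : L, v ≠ 0 ∧ BL v v = 0 ∧ v ∈ Submodule.map (LinearMap.fst ℝ L L) Sβ ∧
      Sβ ⊓ Bw.orthogonal Sβ =
        (Submodule.span ℝ {v}).prod (Submodule.span ℝ {v}) := by
  obtain ⟨w, -, hw⟩ := hLor
  set M := (Sβ ⊓ Bw.orthogonal Sβ).comap (LinearMap.inl ℝ L L)
  have hN : Sβ ⊓ Bw.orthogonal Sβ = M.prod M := eq_prod_comap_inl_of_le_comap two_ne_zero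
    (inf_orthogonal_le_comap (isAdjointPair_prodRot hBw)
      (hSβ ▸ span_beta_le_comap_prodRot hJ hβ))
    (inf_orthogonal_le_comap (isAdjointPair_prodConj hBw)
      (hSβ ▸ span_beta_le_comap_prodConj hαsymm hβ))
  have hM : ∀ x ∈ M, ∀ y ∈ M, BL x y = 0 := fun x hx y hy ↦ by simpa [hBw] using hy.2 _ hx.1
  obtain ⟨v, hvM, hv0⟩ : ∃ v ∈ M, v ≠ 0 := by
    by_contra! h
    exact hdeg (by rw [hN, (Submodule.eq_bot_iff M).mpr h, Submodule.prod_bot])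
  have hvS : v ∈ Sβ.map (LinearMap.fst ℝ L L) := ⟨(v, 0), hvM.1, rfl⟩
  have hfst : ∀ x ∈ Sβ.map (LinearMap.fst ℝ L L), BL x v = 0 := by
    rintro _ ⟨z, hz, rfl⟩
    simpa [hBw] using hvM.2 z hz
  refine ⟨⟨?_, ?_⟩, v, hv0, hM v hvM v hvM, hvS, ?_⟩
  · exact Module.finrank_pos_iff_exists_ne_zero.mpr ⟨⟨v, hvS⟩, by simpa using hv0⟩
  · have := finrank_lt_of_isotropic_of_forall_apply_eq_zero hLsymm hw (hM v hvM v hvM) hv0 hfst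
    omega
  · rw [hN, eq_span_singleton_of_totally_isotropic hLsymm hw hM hvM hv0]

/-- If S(β) ≠ 0 is degenerate then 1 ≤ dim U₀ ≤ p−1 and there is a nonzero
light-like v ∈ U₀ with S(β) ∩ S(β)^⊥ = span{v} ⊕ span{v}. -/
theorem stmt_6 (n p : ℕ) (V L : Type*) [AddCommGroup V] [Module ℝ V]
    [AddCommGroup L] [Module ℝ L] [FiniteDimensional ℝ L]
    (hdV : Module.finrank ℝ V = 2 * n) (hdL : Module.finrank ℝ L = p)
    (BL : LinearMap.BilinForm ℝ L) (hLsymm : BL.IsSymm)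
    (hLor : ∃ w : L, BL w w = -1 ∧ ∀ x : L, BL x w = 0 → x ≠ 0 → 0 < BL x x)
    (J : V →ₗ[ℝ] V) (hJ : J ∘ₗ J = -LinearMap.id)
    (α : V →ₗ[ℝ] V →ₗ[ℝ] L) (hαsymm : ∀ X Y : V, α X Y = α Y X)
    (β : V →ₗ[ℝ] V →ₗ[ℝ] L × L)
    (hβ : ∀ X Y : V, β X Y = (α X Y + α (J X) (J Y), α X (J Y) - α (J X) Y))
    (Bw : LinearMap.BilinForm ℝ (L × L))
    (hBw : ∀ a b : L × L, Bw a b = BL a.1 b.1 - BL a.2 b.2)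
    (Sβ : Submodule ℝ (L × L))
    (hSβ : Sβ = Submodule.span ℝ {z : L × L | ∃ X Y : V, z = β X Y})
    (hne : Sβ ≠ ⊥) (hdeg : Sβ ⊓ Bw.orthogonal Sβ ≠ ⊥) :
    (1 ≤ Module.finrank ℝ (Submodule.map (LinearMap.fst ℝ L L) Sβ) ∧
      Module.finrank ℝ (Submodule.map (LinearMap.fst ℝ L L) Sβ) ≤ p - 1) ∧
    ∃ v : L, v ≠ 0 ∧ BL v v = 0 ∧ v ∈ Submodule.map (LinearMap.fst ℝ L L) Sβ ∧
      Sβ ⊓ Bw.orthogonal Sβ =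
        (Submodule.span ℝ {v}).prod (Submodule.span ℝ {v}) :=
  stmt_6_general p V L hdL BL hLsymm hLor J hJ α hαsymm β hβ Bw hBw Sβ hSβ hdeg
end

section
/- Let β : V × V → L ⊕ L arise from a symmetric bilinear form α via β(X,Y) = (α(X,Y)+α(JX,JY), α(X,JY)−α(JX,Y)), and suppose β is flat with respect to the signature (p,p) form on L ⊕ L. Let X be a regular element of β with β restricted to V × ker β_X nonzero. Then there exists a nonzero light-like vector v ∈ L such that span{v} ⊕ span{v} ⊆ S(β|_{V × ker β_X}) ⊆ β_X(V) ∩ (β_X(V))^⊥. Moreover, if (v',w') ∈ β_X(V) with both v', w' light-like or zero vectors of L, then v', w' ∈ span{v}. -/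
/-!
Moore's lemma: if `X` is regular and `β X Z = 0`, then `β Y Z ∈ β_X(V)`, since otherwise
`β (X + t • Y)` would have larger rank for small `t ≠ 0`. Flatness makes
`S = S(β|_{V × N(X)})` orthogonal to `β_X(V)`, so `S` is totally isotropic. As `N(X)` is
`J`-stable, `S` contains `(b, -a)` with every generator `(a, b)`, and for a nonzero generator
`a` and `b` are light-like and orthogonal (flatness is used once more when `β` vanishes on
`N(X) × N(X)`). In a Lorentzian space orthogonal light-like vectors are proportional, so
`a, b ∈ span {v}`, and combining `(a, b)` with `(b, -a)` gives `(v, 0), (0, v) ∈ S`. Finally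
any `(v', w') ∈ β_X(V)` is orthogonal to these, so `v'` and `w'` are light-like vectors
orthogonal to `v`.
-/

open Module Submodule Filter Topology

theorem LinearIndependent.exists_ne_zero_add_smul {ι W : Type*} [Finite ι] [AddCommGroup W]
    [Module ℝ W] [FiniteDimensional ℝ W] {v : ι → W} (hv : LinearIndependent ℝ v) (w : ι → W) :
    ∃ t : ℝ, t ≠ 0 ∧ LinearIndependent ℝ (v + t • w) := by
  let e := (finBasis ℝ W).equivFun
  have hcont : Continuous fun t : ℝ => e ∘ v + t • (e ∘ w) := by fun_prop
  have hnear : ∀ᶠ t in 𝓝[≠] (0 : ℝ), LinearIndependent ℝ (e ∘ v + t • (e ∘ w)) :=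
    nhdsWithin_le_nhds <| (hcont.tendsto' 0 _ (by simp)).eventually
      (hv.map_injOn e.toLinearMap e.injective.injOn).eventually
  obtain ⟨t, ht, ht0⟩ := (hnear.and self_mem_nhdsWithin).exists
  refine ⟨t, ht0, ?_⟩
  convert ht.map_injOn e.symm.toLinearMap e.symm.injective.injOn
  ext i
  simp

theorem LinearMap.apply_mem_range_of_finrank_range_le {V W : Type*} [AddCommGroup V]
    [Module ℝ V] [AddCommGroup W] [Module ℝ W] [FiniteDimensional ℝ W]
    (β : V →ₗ[ℝ] V →ₗ[ℝ] W) {X : V}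
    (hX : ∀ Z : V, finrank ℝ (range (β Z)) ≤ finrank ℝ (range (β X)))
    (Y : V) {Z : V} (hZ : β X Z = 0) : β Y Z ∈ range (β X) := by
  by_contra hYZ
  set r := finrank ℝ (range (β X))
  let b := finBasis ℝ (range (β X))
  choose Y' hY' using fun i => LinearMap.mem_range.mp (b i).2
  let v : Fin (r + 1) → W := Fin.cons (β Y Z) fun i => β X (Y' i)
  let w : Fin (r + 1) → W := Fin.cons 0 fun i => β Y (Y' i)
  have hv : LinearIndependent ℝ v := by
    refine linearIndependent_finCons.2 ⟨?_, fun h => hYZ (span_le.2 ?_ h)⟩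
    · rw [show (fun i => β X (Y' i)) = (range (β X)).subtype ∘ b from funext hY']
      exact b.linearIndependent.map_injOn _ (range (β X)).injective_subtype.injOn
    · rintro _ ⟨i, rfl⟩
      exact ⟨Y' i, rfl⟩
  obtain ⟨t, ht, hvt⟩ := hv.exists_ne_zero_add_smul w
  -- `β Y Z = β (X + t • Y) (t⁻¹ • Z)` because `β X Z = 0`
  have hspan : span ℝ (Set.range (v + t • w)) ≤ range (β (X + t • Y)) := by
    rw [span_le]
    rintro _ ⟨i, rfl⟩
    induction i using Fin.cases with
    | zero => exact ⟨t⁻¹ • Z, by simp [v, w, hZ, ht]⟩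
    | succ i => exact ⟨Y' i, by simp [v, w]⟩
  have := (finrank_span_eq_card hvt).symm.trans_le (finrank_mono hspan)
  have := hX (X + t • Y)
  simp only [Fintype.card_fin] at *
  omega

theorem LinearMap.BilinForm.IsSymm.mem_span_singleton_of_isotropic {L : Type*} [AddCommGroup L]
    [Module ℝ L] {B : LinearMap.BilinForm ℝ L} (hB : B.IsSymm) {w : L}
    (hw : ∀ x : L, B x w = 0 → x ≠ 0 → 0 < B x x) {u v : L} (hu : B u u = 0) (hv : B v v = 0)
    (huv : B u v = 0) (hv0 : v ≠ 0) : u ∈ span ℝ {v} := by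
  have hvw : B v w ≠ 0 := fun h => (hw v h hv0).ne' hv
  -- `B(v,w) u - B(u,w) v` is isotropic and orthogonal to `w`
  have hx : B v w • u - B u w • v = 0 := by
    by_contra hx
    refine (hw _ ?_ hx).ne' ?_
    · simp only [map_sub, map_smul, LinearMap.sub_apply, LinearMap.smul_apply, smul_eq_mul]
      ring
    · simp [hu, hv, huv, hB.eq v u]
  refine mem_span_singleton.2 ⟨B u w / B v w, ?_⟩
  rw [sub_eq_zero] at hx
  rw [div_eq_inv_mul, mul_smul, ← hx, smul_smul, inv_mul_cancel₀ hvw, one_smul]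

theorem Submodule.prod_span_singleton_le_of_mem {L : Type*} [AddCommGroup L] [Module ℝ L]
    {S : Submodule ℝ (L × L)} {z : L × L} {v : L} (hz : z ∈ S) (hz' : (z.2, -z.1) ∈ S)
    (hz0 : z ≠ 0) (h1 : z.1 ∈ span ℝ {v}) (h2 : z.2 ∈ span ℝ {v}) :
    (span ℝ {v}).prod (span ℝ {v}) ≤ S := by
  obtain ⟨c, hc⟩ := mem_span_singleton.1 h1
  obtain ⟨d, hd⟩ := mem_span_singleton.1 h2
  obtain rfl : z = (c • v, d • v) := Prod.ext hc.symm hd.symm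
  have hcd : c ^ 2 + d ^ 2 ≠ 0 := by
    intro h
    have hc : c = 0 := pow_eq_zero_iff two_ne_zero |>.1 (by linarith [sq_nonneg c, sq_nonneg d])
    have hd : d = 0 := pow_eq_zero_iff two_ne_zero |>.1 (by linarith [sq_nonneg c, sq_nonneg d])
    simp [hc, hd] at hz0
  have hv1 : (v, 0) ∈ S := by
    rw [← S.smul_mem_iff hcd]
    convert S.add_mem (S.smul_mem c hz) (S.smul_mem d hz') using 1
    ext <;> simp <;> module
  have hv2 : (0, v) ∈ S := by
    rw [← S.smul_mem_iff hcd]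
    convert S.sub_mem (S.smul_mem d hz) (S.smul_mem c hz') using 1
    ext <;> simp <;> module
  rintro ⟨x, y⟩ ⟨hx, hy⟩
  obtain ⟨s, rfl⟩ := mem_span_singleton.1 hx
  obtain ⟨s', rfl⟩ := mem_span_singleton.1 hy
  convert S.add_mem (S.smul_mem s hv1) (S.smul_mem s' hv2) using 1
  simp

theorem LinearMap.BilinForm.IsSymm.exists_isotropic_prod_span_singleton_le {L : Type*}
    [AddCommGroup L] [Module ℝ L] {B : LinearMap.BilinForm ℝ L} (hB : B.IsSymm) {w : L}
    (hw : ∀ x : L, B x w = 0 → x ≠ 0 → 0 < B x x) {S : Submodule ℝ (L × L)} {z : L × L}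
    (hz : z ∈ S) (hz' : (z.2, -z.1) ∈ S) (hz0 : z ≠ 0)
    (h1 : B z.1 z.1 = 0) (h2 : B z.2 z.2 = 0) (h12 : B z.1 z.2 = 0) :
    ∃ v : L, v ≠ 0 ∧ B v v = 0 ∧ (span ℝ {v}).prod (span ℝ {v}) ≤ S := by
  by_cases hz1 : z.1 = 0
  · have hz2 : z.2 ≠ 0 := fun h => hz0 (Prod.ext hz1 h)
    exact ⟨z.2, hz2, h2, prod_span_singleton_le_of_mem hz hz' hz0
      (by simp [hz1]) (mem_span_singleton_self _)⟩
  · refine ⟨z.1, hz1, h1, prod_span_singleton_le_of_mem hz hz' hz0 (mem_span_singleton_self _) ?_⟩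
    exact hB.mem_span_singleton_of_isotropic hw h2 h1 (by rw [hB.eq]; exact h12) hz1

namespace HermitianPair

variable {V L : Type*} [AddCommGroup V] [Module ℝ V] [AddCommGroup L] [Module ℝ L]
  {J : V →ₗ[ℝ] V} {α : V →ₗ[ℝ] V →ₗ[ℝ] L} {β : V →ₗ[ℝ] V →ₗ[ℝ] L × L}

theorem apply_J_right (hJ : J ∘ₗ J = -LinearMap.id)
    (hβ : ∀ X Y : V, β X Y = (α X Y + α (J X) (J Y), α X (J Y) - α (J X) Y)) (Y Z : V) :
    β Y (J Z) = ((β Y Z).2, -(β Y Z).1) := by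
  have hJJ : J (J Z) = -Z := LinearMap.ext_iff.mp hJ Z
  simp only [hβ, hJJ, map_neg, Prod.mk.injEq]
  constructor <;> abel

theorem apply_swap (hα : ∀ X Y : V, α X Y = α Y X)
    (hβ : ∀ X Y : V, β X Y = (α X Y + α (J X) (J Y), α X (J Y) - α (J X) Y)) (Y Z : V) :
    β Z Y = ((β Y Z).1, -(β Y Z).2) := by
  simp only [hβ, hα Z Y, hα (J Z) (J Y), hα Z (J Y), hα (J Z) Y, neg_sub]

theorem J_mem_ker (hJ : J ∘ₗ J = -LinearMap.id)
    (hβ : ∀ X Y : V, β X Y = (α X Y + α (J X) (J Y), α X (J Y) - α (J X) Y)) {X Z : V}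
    (hZ : Z ∈ LinearMap.ker (β X)) : J Z ∈ LinearMap.ker (β X) := by
  rw [LinearMap.mem_ker] at hZ ⊢
  simp [apply_J_right hJ hβ, hZ]

theorem exists_isotropic_apply_of_mem_ker {BL : LinearMap.BilinForm ℝ L} (hBL : BL.IsSymm)
    (hJ : J ∘ₗ J = -LinearMap.id) (hα : ∀ X Y : V, α X Y = α Y X)
    (hβ : ∀ X Y : V, β X Y = (α X Y + α (J X) (J Y), α X (J Y) - α (J X) Y))
    {Bw : LinearMap.BilinForm ℝ (L × L)} (hBw : ∀ a b : L × L, Bw a b = BL a.1 b.1 - BL a.2 b.2)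
    (hflat : ∀ X Y Z T : V, Bw (β X Y) (β Z T) = Bw (β X T) (β Z Y)) {X : V}
    (hiso : ∀ Y Y', ∀ Z ∈ LinearMap.ker (β X), ∀ Z' ∈ LinearMap.ker (β X),
      Bw (β Y Z) (β Y' Z') = 0)
    (hres : ∃ Y, ∃ Z ∈ LinearMap.ker (β X), β Y Z ≠ 0) :
    ∃ Y, ∃ Z ∈ LinearMap.ker (β X), β Y Z ≠ 0 ∧ BL (β Y Z).1 (β Y Z).1 = 0 ∧
      BL (β Y Z).2 (β Y Z).2 = 0 ∧ BL (β Y Z).1 (β Y Z).2 = 0 := by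
  have hdiag (Z : V) : (β Z Z).2 = 0 := by simp [hβ, hα Z (J Z)]
  have hpair (Y : V) {Z : V} (hZ : Z ∈ LinearMap.ker (β X)) :
      BL (β Y Z).1 (β Y Z).1 = BL (β Y Z).2 (β Y Z).2 ∧ BL (β Y Z).1 (β Y Z).2 = 0 := by
    have h1 := hiso Y Y Z hZ Z hZ
    have h2 := hiso Y Y Z hZ (J Z) (J_mem_ker hJ hβ hZ)
    rw [hBw] at h1
    rw [hBw, apply_J_right hJ hβ, map_neg, hBL.eq (β Y Z).2] at h2
    constructor <;> linarith
  by_cases hZZ : ∃ Z ∈ LinearMap.ker (β X), β Z Z ≠ 0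
  · obtain ⟨Z, hZ, hne⟩ := hZZ
    obtain ⟨h1, h12⟩ := hpair Z hZ
    rw [hdiag, map_zero] at h1
    exact ⟨Z, Z, hZ, hne, h1, by simp [hdiag], h12⟩
  · push Not at hZZ
    obtain ⟨Y, Z, hZ, hne⟩ := hres
    obtain ⟨h1, h12⟩ := hpair Y hZ
    -- flatness gives `⟨⟨β Y Z, β Z Y⟩⟩ = ⟨⟨β Y Y, β Z Z⟩⟩ = 0`
    have h3 := hflat Y Z Z Y
    rw [hZZ Z hZ, apply_swap hα hβ Y Z, hBw, hBw, map_neg] at h3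
    simp only [Prod.fst_zero, Prod.snd_zero, map_zero, sub_zero, sub_neg_eq_add] at h3
    exact ⟨Y, Z, hZ, hne, by linarith, by linarith, h12⟩

end HermitianPair

open HermitianPair

theorem stmt_7_general (V L : Type*) [AddCommGroup V] [Module ℝ V]
    [AddCommGroup L] [Module ℝ L] [FiniteDimensional ℝ L]
    (BL : LinearMap.BilinForm ℝ L) (hLsymm : BL.IsSymm)
    (hLor : ∃ w : L, BL w w = -1 ∧ ∀ x : L, BL x w = 0 → x ≠ 0 → 0 < BL x x)
    (J : V →ₗ[ℝ] V) (hJ : J ∘ₗ J = -LinearMap.id)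
    (α : V →ₗ[ℝ] V →ₗ[ℝ] L) (hαsymm : ∀ X Y : V, α X Y = α Y X)
    (β : V →ₗ[ℝ] V →ₗ[ℝ] L × L)
    (hβ : ∀ X Y : V, β X Y = (α X Y + α (J X) (J Y), α X (J Y) - α (J X) Y))
    (Bw : LinearMap.BilinForm ℝ (L × L))
    (hBw : ∀ a b : L × L, Bw a b = BL a.1 b.1 - BL a.2 b.2)
    (hflat : ∀ X Y Z T : V, Bw (β X Y) (β Z T) = Bw (β X T) (β Z Y))
    (X : V)
    (hreg : ∀ Z : V, Module.finrank ℝ (LinearMap.range (β Z)) ≤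
      Module.finrank ℝ (LinearMap.range (β X)))
    (hres : ¬ (∀ (Y : V), ∀ Z ∈ LinearMap.ker (β X), β Y Z = 0)) :
    ∃ v : L, v ≠ 0 ∧ BL v v = 0 ∧
      (Submodule.span ℝ {v}).prod (Submodule.span ℝ {v}) ≤
        Submodule.span ℝ {z : L × L | ∃ Y Z : V, Z ∈ LinearMap.ker (β X) ∧ z = β Y Z} ∧
      Submodule.span ℝ {z : L × L | ∃ Y Z : V, Z ∈ LinearMap.ker (β X) ∧ z = β Y Z} ≤
        LinearMap.range (β X) ⊓ Bw.orthogonal (LinearMap.range (β X)) ∧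
      (∀ v' w' : L, (v', w') ∈ LinearMap.range (β X) → BL v' v' = 0 → BL w' w' = 0 →
        v' ∈ Submodule.span ℝ {v} ∧ w' ∈ Submodule.span ℝ {v}) := by
  obtain ⟨w, -, hw⟩ := hLor
  set S := span ℝ {z : L × L | ∃ Y Z : V, Z ∈ LinearMap.ker (β X) ∧ z = β Y Z}
  have hgen (Y : V) {Z : V} (hZ : Z ∈ LinearMap.ker (β X)) : β Y Z ∈ S :=
    subset_span ⟨Y, Z, hZ, rfl⟩
  have hSU : S ≤ LinearMap.range (β X) := span_le.2 <| by
    rintro _ ⟨Y, Z, hZ, rfl⟩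
    exact β.apply_mem_range_of_finrank_range_le hreg Y hZ
  have hSperp : S ≤ Bw.orthogonal (LinearMap.range (β X)) := span_le.2 <| by
    rintro _ ⟨Y, Z, hZ, rfl⟩ _ ⟨T, rfl⟩
    rw [hflat, LinearMap.mem_ker.1 hZ, map_zero, LinearMap.zero_apply]
  obtain ⟨Y, Z, hZ, hne, h1, h2, h12⟩ := exists_isotropic_apply_of_mem_ker hLsymm hJ hαsymm hβ
    hBw hflat (fun Y Y' Z hZ Z' hZ' => hSperp (hgen Y' hZ') _ (hSU (hgen Y hZ)))
    (by simpa using hres)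
  obtain ⟨v, hv0, hvv, hvS⟩ := hLsymm.exists_isotropic_prod_span_singleton_le hw (hgen Y hZ)
    (apply_J_right hJ hβ Y Z ▸ hgen Y (J_mem_ker hJ hβ hZ)) hne h1 h2 h12
  refine ⟨v, hv0, hvv, hvS, le_inf hSU hSperp, fun v' w' hvw hv' hw' => ⟨?_, ?_⟩⟩
  · have := hSperp (hvS (show (v, 0) ∈ _ from ⟨mem_span_singleton_self v, zero_mem _⟩)) _ hvw
    exact hLsymm.mem_span_singleton_of_isotropic hw hv' hvv (by simpa [hBw] using this) hv0
  · have := hSperp (hvS (show (0, v) ∈ _ from ⟨zero_mem _, mem_span_singleton_self v⟩)) _ hvw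
    exact hLsymm.mem_span_singleton_of_isotropic hw hw' hvv (by simpa [hBw] using this) hv0

/-- Lemma: for β flat, X regular with β|_{V×N(X)} ≠ 0, there is a nonzero light-like
v ∈ L with span{v}⊕span{v} ⊆ S(β|_{V×N(X)}) ⊆ β_X(V) ∩ β_X(V)^⊥; moreover any
(v',w') ∈ β_X(V) with v',w' light-like or zero has v',w' ∈ span{v}. -/
theorem stmt_7 (V L : Type*) [AddCommGroup V] [Module ℝ V] [FiniteDimensional ℝ V]
    [AddCommGroup L] [Module ℝ L] [FiniteDimensional ℝ L]
    (BL : LinearMap.BilinForm ℝ L) (hLsymm : BL.IsSymm)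
    (hLor : ∃ w : L, BL w w = -1 ∧ ∀ x : L, BL x w = 0 → x ≠ 0 → 0 < BL x x)
    (J : V →ₗ[ℝ] V) (hJ : J ∘ₗ J = -LinearMap.id)
    (α : V →ₗ[ℝ] V →ₗ[ℝ] L) (hαsymm : ∀ X Y : V, α X Y = α Y X)
    (β : V →ₗ[ℝ] V →ₗ[ℝ] L × L)
    (hβ : ∀ X Y : V, β X Y = (α X Y + α (J X) (J Y), α X (J Y) - α (J X) Y))
    (Bw : LinearMap.BilinForm ℝ (L × L))
    (hBw : ∀ a b : L × L, Bw a b = BL a.1 b.1 - BL a.2 b.2)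
    (hflat : ∀ X Y Z T : V, Bw (β X Y) (β Z T) = Bw (β X T) (β Z Y))
    (X : V)
    (hreg : ∀ Z : V, Module.finrank ℝ (LinearMap.range (β Z)) ≤
      Module.finrank ℝ (LinearMap.range (β X)))
    (hres : ¬ (∀ (Y : V), ∀ Z ∈ LinearMap.ker (β X), β Y Z = 0)) :
    ∃ v : L, v ≠ 0 ∧ BL v v = 0 ∧
      (Submodule.span ℝ {v}).prod (Submodule.span ℝ {v}) ≤
        Submodule.span ℝ {z : L × L | ∃ Y Z : V, Z ∈ LinearMap.ker (β X) ∧ z = β Y Z} ∧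
      Submodule.span ℝ {z : L × L | ∃ Y Z : V, Z ∈ LinearMap.ker (β X) ∧ z = β Y Z} ≤
        LinearMap.range (β X) ⊓ Bw.orthogonal (LinearMap.range (β X)) ∧
      (∀ v' w' : L, (v', w') ∈ LinearMap.range (β X) → BL v' v' = 0 → BL w' w' = 0 →
        v' ∈ Submodule.span ℝ {v} ∧ w' ∈ Submodule.span ℝ {v}) :=
  stmt_7_general V L BL hLsymm hLor J hJ α hαsymm β hβ Bw hBw hflat X hreg hres
end

section
/- Under the assumptions: V^{2n} has a positive definite inner product with isometric complex structure J, α : V × V → L^p symmetric bilinear with ⟨α(X,Y),w⟩ = −(X,Y) for a unit time-like w, and the associated β is flat with S(β) degenerate. Let v ∈ U₀ = π₁(S(β)) be a light-like vector with S(β) ∩ S(β)^⊥ = span{v} ⊕ span{v}. Then the plane L = span{v,w} ⊂ L^p is Lorentzian (the induced form on L has signature (1,1)), and choosing v with ⟨v,w⟩ = −1, one has β(X,Y) = β₁(X,Y) + 2((X,Y)v, (X,JY)v) for all X,Y, where β₁ is the composition of β with the orthogonal projection onto L^⊥ ⊕ L^⊥. -/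
/-!
Every `β X Y` lies in `S(β)`, so it is orthogonal to the radical `span{v} ⊕ span{v}`: both
components of `β X Y` are orthogonal to `v`. Their `w`-components are fixed by
`⟨α(X,Y), w⟩ = −(X,Y)` and the skewness of `J`, and since `⟨v,v⟩ = 0`, `⟨v,w⟩ = −1`, subtracting
the right multiples of `v` lands in `span{v,w}^⊥`. The plane `span{v,w}` is Lorentzian because a
light-like `v ≠ 0` cannot be orthogonal to the time-like `w`, as `w^⊥` is space-like.
-/

open LinearMap (BilinForm)

namespace LinearMap.BilinForm

section Field

variable {K M : Type*} [Field K] [AddCommGroup M] [Module K M] {B : BilinForm K M} {v w : M}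

theorem linearIndependent_pair_of_isotropic (hvv : B v v = 0) (hvw : B v w ≠ 0) :
    LinearIndependent K ![v, w] := by
  have hv : v ≠ 0 := by rintro rfl; simp at hvw
  refine (LinearIndependent.pair_iff' hv).mpr fun a hw => hvw ?_
  rw [← hw, map_smul, hvv, smul_zero]

theorem finrank_span_pair_of_isotropic (hvv : B v v = 0) (hvw : B v w ≠ 0) :
    Module.finrank K (Submodule.span K {v, w}) = 2 := by
  rw [← Matrix.range_cons_cons_empty v w ![],
    finrank_span_eq_card (linearIndependent_pair_of_isotropic hvv hvw), Fintype.card_fin]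

theorem exists_lorentzian_frame_span_pair (hB : B.IsSymm) (hvv : B v v = 0) (hww : B w w = -1)
    (hvw : B v w ≠ 0) :
    ∃ a b : M, a ∈ Submodule.span K {v, w} ∧ b ∈ Submodule.span K {v, w} ∧
      B a a = -1 ∧ B b b = 1 ∧ B a b = 0 := by
  have hwv : B w v = B v w := hB.eq w v
  refine ⟨w, (B v w)⁻¹ • v + w, Submodule.subset_span (by simp),
    Submodule.mem_span_pair.mpr ⟨(B v w)⁻¹, 1, by simp⟩, hww, ?_, ?_⟩
  · simp only [map_add, map_smul, LinearMap.add_apply, LinearMap.smul_apply, smul_eq_mul, hvv,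
      hww, hwv]
    field_simp
    ring
  · simp [hww, hwv, inv_mul_cancel₀ hvw]

end Field

section CommRing

variable {R M : Type*} [CommRing R] [AddCommGroup M] [Module R M] {B : BilinForm R M} {v w : M}

theorem sub_smul_mem_orthogonal_span_pair (hB : B.IsSymm) (hvv : B v v = 0) (hvw : B v w = -1)
    {u : M} {c : R} (huv : B u v = 0) (huw : B u w = -c) :
    u - c • v ∈ B.orthogonal (Submodule.span R {v, w}) := by
  intro n hn
  obtain ⟨a, b, rfl⟩ := Submodule.mem_span_pair.mp hn
  have hv : B v (u - c • v) = 0 := by simp [hB.eq v u, huv, hvv]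
  have hw : B w (u - c • v) = 0 := by simp [hB.eq w u, hB.eq w v, huw, hvw]
  simp [hv, hw]

theorem apply_ne_zero_of_isotropic [PartialOrder R]
    (hpos : ∀ x : M, B x w = 0 → x ≠ 0 → 0 < B x x) (hv : v ≠ 0) (hvv : B v v = 0) : B v w ≠ 0 :=
  fun hvw => (hpos v hvw hv).ne' hvv

theorem apply_left_eq_neg_of_isometric_complexStructure {J : M →ₗ[R] M}
    (hJ : J ∘ₗ J = -LinearMap.id) (hJiso : ∀ X Y : M, B (J X) (J Y) = B X Y) (X Y : M) :
    B (J X) Y = -B X (J Y) := by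
  have hJJ : J (J X) = -X := LinearMap.congr_fun hJ X
  rw [← hJiso, hJJ, map_neg, LinearMap.neg_apply]

end CommRing

theorem components_orthogonal_of_span_prod_le_orthogonal {R L : Type*} [CommRing R]
    [AddCommGroup L] [Module R L] {BL : BilinForm R L} {Bw : BilinForm R (L × L)}
    (hBw : ∀ a b : L × L, Bw a b = BL a.1 b.1 - BL a.2 b.2) {S : Submodule R (L × L)} {v : L}
    (hv : (Submodule.span R {v}).prod (Submodule.span R {v}) ≤ Bw.orthogonal S)
    {z : L × L} (hz : z ∈ S) : BL z.1 v = 0 ∧ BL z.2 v = 0 := by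
  have h1 := hv (x := (v, 0)) ⟨Submodule.mem_span_singleton_self v, Submodule.zero_mem _⟩ z hz
  have h2 := hv (x := (0, v)) ⟨Submodule.zero_mem _, Submodule.mem_span_singleton_self v⟩ z hz
  simp only [hBw, map_zero, sub_zero, zero_sub, neg_eq_zero] at h1 h2
  exact ⟨h1, h2⟩

end LinearMap.BilinForm

open LinearMap.BilinForm

theorem stmt_10_general (V L : Type*) [AddCommGroup V] [Module ℝ V] [AddCommGroup L] [Module ℝ L]
    (BV : LinearMap.BilinForm ℝ V)
    (J : V →ₗ[ℝ] V) (hJ : J ∘ₗ J = -LinearMap.id)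
    (hJiso : ∀ X Y : V, BV (J X) (J Y) = BV X Y)
    (BL : LinearMap.BilinForm ℝ L) (hLsymm : BL.IsSymm)
    (w : L) (hw : BL w w = -1)
    (hLor : ∀ x : L, BL x w = 0 → x ≠ 0 → 0 < BL x x)
    (α : V →ₗ[ℝ] V →ₗ[ℝ] L)
    (hαw : ∀ X Y : V, BL (α X Y) w = -(BV X Y))
    (β : V →ₗ[ℝ] V →ₗ[ℝ] L × L)
    (hβ : ∀ X Y : V, β X Y = (α X Y + α (J X) (J Y), α X (J Y) - α (J X) Y))
    (Bw : LinearMap.BilinForm ℝ (L × L))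
    (hBw : ∀ a b : L × L, Bw a b = BL a.1 b.1 - BL a.2 b.2)
    (Sβ : Submodule ℝ (L × L))
    (hSβ : Sβ = Submodule.span ℝ {z : L × L | ∃ X Y : V, z = β X Y})
    (v : L) (hv0 : v ≠ 0) (hvlight : BL v v = 0)
    (hvrad : Sβ ⊓ Bw.orthogonal Sβ =
      (Submodule.span ℝ {v}).prod (Submodule.span ℝ {v})) :
    (Module.finrank ℝ ↥(Submodule.span ℝ {v, w}) = 2 ∧
      ∃ a b : L, a ∈ Submodule.span ℝ {v, w} ∧ b ∈ Submodule.span ℝ {v, w} ∧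
        BL a a = -1 ∧ BL b b = 1 ∧ BL a b = 0) ∧
    (BL v w = -1 →
      ∃ β₁ : V → V → L × L,
        (∀ X Y : V, (β₁ X Y).1 ∈ BL.orthogonal (Submodule.span ℝ {v, w}) ∧
          (β₁ X Y).2 ∈ BL.orthogonal (Submodule.span ℝ {v, w})) ∧
        (∀ X Y : V, β X Y = β₁ X Y + ((2 * BV X Y) • v, (2 * BV X (J Y)) • v))) := by
  have hvw : BL v w ≠ 0 := apply_ne_zero_of_isotropic hLor hv0 hvlight
  refine ⟨⟨finrank_span_pair_of_isotropic hvlight hvw,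
    exists_lorentzian_frame_span_pair hLsymm hvlight hw hvw⟩, fun hvw₁ => ?_⟩
  have hv : ∀ X Y : V, BL (β X Y).1 v = 0 ∧ BL (β X Y).2 v = 0 := fun X Y =>
    components_orthogonal_of_span_prod_le_orthogonal hBw (hvrad ▸ inf_le_right)
      (hSβ ▸ Submodule.subset_span ⟨X, Y, rfl⟩)
  have hw₁ : ∀ X Y : V, BL (β X Y).1 w = -(2 * BV X Y) := fun X Y => by
    simp only [hβ, map_add, LinearMap.add_apply, hαw, hJiso]
    ring
  have hw₂ : ∀ X Y : V, BL (β X Y).2 w = -(2 * BV X (J Y)) := fun X Y => by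
    simp only [hβ, map_sub, LinearMap.sub_apply, hαw,
      apply_left_eq_neg_of_isometric_complexStructure hJ hJiso]
    ring
  refine ⟨fun X Y => β X Y - ((2 * BV X Y) • v, (2 * BV X (J Y)) • v), fun X Y =>
    ⟨sub_smul_mem_orthogonal_span_pair hLsymm hvlight hvw₁ (hv X Y).1 (hw₁ X Y),
      sub_smul_mem_orthogonal_span_pair hLsymm hvlight hvw₁ (hv X Y).2 (hw₂ X Y)⟩,
    fun X Y => (sub_add_cancel _ _).symm⟩

/-- If β is flat with S(β) degenerate and v is the light-like vector of
S(β) ∩ S(β)^⊥ = span{v} ⊕ span{v}, then L₀ = span{v,w} is a Lorentzian plane and,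
choosing v with ⟨v,w⟩ = −1, β(X,Y) = β₁(X,Y) + 2((X,Y)v,(X,JY)v) where β₁ is the
component of β in L₀^⊥ ⊕ L₀^⊥. -/
theorem stmt_10 (V L : Type*) [AddCommGroup V] [Module ℝ V] [AddCommGroup L] [Module ℝ L]
    [FiniteDimensional ℝ L]
    (BV : LinearMap.BilinForm ℝ V) (hVsymm : BV.IsSymm)
    (hVpos : ∀ X : V, X ≠ 0 → 0 < BV X X)
    (J : V →ₗ[ℝ] V) (hJ : J ∘ₗ J = -LinearMap.id)
    (hJiso : ∀ X Y : V, BV (J X) (J Y) = BV X Y)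
    (BL : LinearMap.BilinForm ℝ L) (hLsymm : BL.IsSymm)
    (w : L) (hw : BL w w = -1)
    (hLor : ∀ x : L, BL x w = 0 → x ≠ 0 → 0 < BL x x)
    (α : V →ₗ[ℝ] V →ₗ[ℝ] L) (hαsymm : ∀ X Y : V, α X Y = α Y X)
    (hαw : ∀ X Y : V, BL (α X Y) w = -(BV X Y))
    (β : V →ₗ[ℝ] V →ₗ[ℝ] L × L)
    (hβ : ∀ X Y : V, β X Y = (α X Y + α (J X) (J Y), α X (J Y) - α (J X) Y))
    (Bw : LinearMap.BilinForm ℝ (L × L))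
    (hBw : ∀ a b : L × L, Bw a b = BL a.1 b.1 - BL a.2 b.2)
    (hflat : ∀ X Y Z T : V, Bw (β X Y) (β Z T) = Bw (β X T) (β Z Y))
    (Sβ : Submodule ℝ (L × L))
    (hSβ : Sβ = Submodule.span ℝ {z : L × L | ∃ X Y : V, z = β X Y})
    (hdeg : Sβ ⊓ Bw.orthogonal Sβ ≠ ⊥)
    (v : L) (hv0 : v ≠ 0) (hvlight : BL v v = 0)
    (hvU : v ∈ Submodule.map (LinearMap.fst ℝ L L) Sβ)
    (hvrad : Sβ ⊓ Bw.orthogonal Sβ =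
      (Submodule.span ℝ {v}).prod (Submodule.span ℝ {v})) :
    (Module.finrank ℝ ↥(Submodule.span ℝ {v, w}) = 2 ∧
      ∃ a b : L, a ∈ Submodule.span ℝ {v, w} ∧ b ∈ Submodule.span ℝ {v, w} ∧
        BL a a = -1 ∧ BL b b = 1 ∧ BL a b = 0) ∧
    (BL v w = -1 →
      ∃ β₁ : V → V → L × L,
        (∀ X Y : V, (β₁ X Y).1 ∈ BL.orthogonal (Submodule.span ℝ {v, w}) ∧
          (β₁ X Y).2 ∈ BL.orthogonal (Submodule.span ℝ {v, w})) ∧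
        (∀ X Y : V, β X Y = β₁ X Y + ((2 * BV X Y) • v, (2 * BV X (J Y)) • v))) :=
  stmt_10_general V L BV J hJ hJiso BL hLsymm w hw hLor α hαw β hβ Bw hBw Sβ hSβ v hv0 hvlight hvrad
end

section
/- Let β be flat with S(β) degenerate as above, and let γ(X,Y) = (α(X,Y), α(X,JY)) satisfy the compatibility ⟨⟨β(X,Y),γ(Z,T)⟩⟩ = ⟨⟨β(X,T),γ(Z,Y)⟩⟩ for all X,Y,Z,T. If s = dim π₁(S(β)) ≤ n−1, then for the light-like vector v with S(β) ∩ S(β)^⊥ = span{v} ⊕ span{v}, one has ⟨α(X,Y),v⟩ = 0 for all X,Y ∈ V^{2n}. -/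
/-!
Let `P` be the projection of `L` onto `w^⊥` along the light-like `v` (possible as `⟨v, w⟩ ≠ 0`,
`w^⊥` being space-like) and `A = (P β₁, P β₂)`. Since `(v, 0)` and `(0, v)` lie in the radical of
`S(β)`, `⟪A(X, Y), A(Z, T)⟫ = ⟪β(X, Y), β(Z, T)⟫`, so `A` is flat; moreover
`A(Y, X) = conj A(X, Y)` and `A` takes values in the positive definite `w^⊥ × w^⊥`. Moore's lemma
then gives `Y₀` with `ker A(·, Y₀) ⊆ ker A`. As `A` takes values in `P(π₁ S(β))`, of dimension
`≤ s - 1 ≤ n - 2`, this kernel has dimension `≥ 4`. For `X` in it,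
`β(X, Y) = c (⟨X, Y⟩ v, ⟨X, JY⟩ v)` with `c = -2 / ⟨v, w⟩`, and the compatibility condition at
`Y = X` becomes `|X|² f(T) = ⟨X, T⟩ f(X) - ⟨X, JT⟩ f(JX)` for `f = ⟨v, α(Z, ·)⟩`. Two such `X`
that are orthogonal over `ℂ` force `f = 0`.
-/

open Module LinearMap Topology

section Moore

variable {V E : Type*} [AddCommGroup V] [Module ℝ V] [AddCommGroup E] [Module ℝ E]
  [FiniteDimensional ℝ E]

theorem LinearMap.apply_mem_range_of_finrank_range_add_smul_le {f g : V →ₗ[ℝ] E}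
    (h : ∀ t : ℝ, finrank ℝ (range (f + t • g)) ≤ finrank ℝ (range f)) {x : V} (hx : f x = 0) :
    g x ∈ range f := by
  by_contra hgx
  set r := finrank ℝ (range f)
  have hb : ∀ i, ∃ b : V, f b = finBasis ℝ (range f) i := fun i => (finBasis ℝ (range f) i).2
  choose b hb using hb
  -- `F t` lies in `range (f + t • g)` for `t ≠ 0` and is independent at `t = 0`, so for small `t`
  let F : ℝ → Fin (r + 1) → E := fun t => Fin.cons (g x) fun i => f (b i) + t • g (b i)
  -- coordinates on `E`, where linear independence is an open condition
  let e := (finBasis ℝ E).equivFun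
  have hF₀ : LinearIndependent ℝ (e ∘ F 0) := by
    refine LinearIndependent.map' ?_ e.toLinearMap e.ker
    have hfb : (fun i => f (b i)) = (range f).subtype ∘ finBasis ℝ (range f) := funext hb
    simp only [F, zero_smul, add_zero]
    refine linearIndependent_finCons.2 ⟨?_, fun hmem => hgx ?_⟩
    · rw [hfb]
      exact (finBasis ℝ (range f)).linearIndependent.map' _ (range f).ker_subtype
    · refine Submodule.span_le.2 ?_ hmem
      rintro _ ⟨i, rfl⟩
      simp
  have hcont : Continuous fun t => e ∘ F t := by
    have hF : (fun t => e ∘ F t) =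
        fun t => Fin.cons (e (g x)) fun i => e (f (b i)) + t • e (g (b i)) := by
      ext t i : 2
      refine Fin.cases ?_ (fun i => ?_) i <;> simp [F]
    rw [hF]
    fun_prop
  obtain ⟨t, hind, ht⟩ := ((hcont.tendsto 0).mono_left nhdsWithin_le_nhds
    |>.eventually hF₀.eventually |>.and self_mem_nhdsWithin).exists (f := 𝓝[≠] (0 : ℝ))
  have hspan : Submodule.span ℝ (Set.range (F t)) ≤ range (f + t • g) := by
    refine Submodule.span_le.2 ?_
    rintro _ ⟨i, rfl⟩
    refine Fin.cases ⟨t⁻¹ • x, ?_⟩ (fun i => ⟨b i, rfl⟩) i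
    simp [F, hx, smul_smul, inv_mul_cancel₀ (show t ≠ 0 from ht)]
  have hle := (finrank_span_eq_card (hind.of_comp e.toLinearMap)).symm.trans_le
    (Submodule.finrank_mono hspan)
  rw [Fintype.card_fin] at hle
  exact Nat.not_succ_le_self r (hle.trans (h t))

theorem LinearMap.exists_ker_flip_le_ker (A : V →ₗ[ℝ] V →ₗ[ℝ] E) (p : E →ₗ[ℝ] E →ₗ[ℝ] ℝ)
    (hflat : ∀ x y z t, p (A x y) (A z t) = p (A x t) (A z y))
    (hdef : ∀ u t, p (A t u) (A u t) = 0 → A u t = 0) :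
    ∃ Y₀, ker (A.flip Y₀) ≤ ker A := by
  -- Take `Y₀` of maximal rank. For `u` in its kernel, `A u u` lies in `range (A.flip Y₀)` and
  -- by flatness is `p`-orthogonal to it, hence `p`-isotropic.
  obtain ⟨Y₀, hY₀⟩ : ∃ Y₀, ∀ y, finrank ℝ (range (A.flip y)) ≤ finrank ℝ (range (A.flip Y₀)) := by
    have hbdd : BddAbove (Set.range fun y => finrank ℝ (range (A.flip y))) :=
      ⟨finrank ℝ E, by rintro _ ⟨y, rfl⟩; exact Submodule.finrank_le _⟩
    obtain ⟨Y₀, hY₀⟩ := Nat.sSup_mem (Set.range_nonempty _) hbdd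
    exact ⟨Y₀, fun y => (le_csSup hbdd ⟨y, rfl⟩).trans_eq hY₀.symm⟩
  refine ⟨Y₀, fun u hu => ?_⟩
  rw [mem_ker, flip_apply] at hu
  obtain ⟨z, hz⟩ : A u u ∈ range (A.flip Y₀) :=
    apply_mem_range_of_finrank_range_add_smul_le (g := A.flip u)
      (fun t => by rw [← map_smul, ← map_add]; exact hY₀ _) hu
  rw [flip_apply] at hz
  have huu : A u u = 0 := hdef u u <| by
    have h := hflat u u z Y₀
    rwa [hu, map_zero, LinearMap.zero_apply, hz] at h
  ext t
  exact hdef u t (by rw [hflat, huu, map_zero])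

end Moore

section Dimension

variable {R M M₂ : Type*} [DivisionRing R] [AddCommGroup M] [Module R M] [AddCommGroup M₂]
  [Module R M₂]

theorem Submodule.finrank_prod_le (p : Submodule R M) (q : Submodule R M₂)
    [FiniteDimensional R p] [FiniteDimensional R q] :
    finrank R (p.prod q) ≤ finrank R p + finrank R q := by
  calc finrank R (p.prod q) = finrank R (range (p.subtype.prodMap q.subtype)) := by
        rw [range_prodMap, p.range_subtype, q.range_subtype]
    _ ≤ finrank R (p × q) := finrank_range_le _
    _ = finrank R p + finrank R q := finrank_prod

theorem Submodule.finrank_map_lt_of_mem_ker {p : Submodule R M} [FiniteDimensional R p]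
    {f : M →ₗ[R] M₂} {x : M} (hxp : x ∈ p) (hx : x ≠ 0) (hfx : f x = 0) :
    finrank R (p.map f) < finrank R p := by
  rw [← range_domRestrict, ← finrank_range_add_finrank_ker (f.domRestrict p),
    Nat.lt_add_right_iff_pos, finrank_pos_iff_exists_ne_zero]
  exact ⟨⟨⟨x, hxp⟩, hfx⟩, by simpa [Subtype.ext_iff] using hx⟩

theorem LinearMap.exists_ne_zero_apply_eq_zero_of_finrank_lt {V E F : Type*} [AddCommGroup V]
    [Module R V] [FiniteDimensional R V] [AddCommGroup E] [Module R E] [AddCommGroup F] [Module R F]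
    [FiniteDimensional R F] (f : V →ₗ[R] E) (ℓ : V →ₗ[R] F)
    (h : finrank R (range f) + finrank R F < finrank R V) :
    ∃ x, x ≠ 0 ∧ f x = 0 ∧ ℓ x = 0 := by
  have hF : finrank R F < finrank R (ker f) := by
    have := finrank_range_add_finrank_ker f
    omega
  obtain ⟨⟨x, hxf⟩, hxℓ, hx⟩ := Submodule.exists_mem_ne_zero_of_ne_bot
    (ker_ne_bot_of_finrank_lt (f := ℓ.domRestrict (ker f)) hF)
  exact ⟨x, by simpa using hx, hxf, hxℓ⟩

end Dimension

namespace LinearMap.BilinForm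

theorem apply_sub_sub_of_mem_radical {R M : Type*} [CommRing R]
    [AddCommGroup M] [Module R M] {B : LinearMap.BilinForm R M} (hB : B.IsSymm)
    {S : Submodule R M} {a b r r' : M} (ha : a ∈ S) (hb : b ∈ S)
    (hr : r ∈ S ⊓ B.orthogonal S) (hr' : r' ∈ S ⊓ B.orthogonal S) :
    B (a - r) (b - r') = B a b := by
  have h₁ : B a r' = 0 := (mem_orthogonal_iff.1 hr'.2) a ha
  have h₂ : B r b = 0 := by rw [hB.eq]; exact (mem_orthogonal_iff.1 hr.2) b hb
  have h₃ : B r r' = 0 := (mem_orthogonal_iff.1 hr'.2) r hr.1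
  simp [h₁, h₂, h₃]

variable {V : Type*} [AddCommGroup V] [Module ℝ V] {B : LinearMap.BilinForm ℝ V} {J : V →ₗ[ℝ] V}

theorem apply_apply_J_eq_neg (hJ : J ∘ₗ J = -LinearMap.id)
    (hJiso : ∀ x y, B (J x) (J y) = B x y) (x y : V) : B x (J y) = -B (J x) y := by
  rw [← hJiso, show J (J y) = -y by simpa using congr($hJ y), map_neg]

theorem apply_J_self_eq_zero (hB : B.IsSymm) (hJ : J ∘ₗ J = -LinearMap.id)
    (hJiso : ∀ x y, B (J x) (J y) = B x y) (x : V) : B x (J x) = 0 := by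
  linarith [apply_apply_J_eq_neg hJ hJiso x x, hB.eq (J x) x]

/-- `g` vanishes at `ξ = g X₀ • X₀ + g (J X₀) • J X₀` by the identity for `X₁`, while the identity
for `X₀` at `ξ` reads `0 = B X₀ X₀ * (g X₀ ^ 2 + g (J X₀) ^ 2)`. -/
theorem eq_zero_of_forall_mul_eq_sub (hJ : J ∘ₗ J = -LinearMap.id) {g : V → ℝ} {X₀ X₁ : V}
    (h₀ : B X₀ X₀ ≠ 0) (h₁ : B X₁ X₁ ≠ 0) (h₁₀ : B X₁ X₀ = 0) (h₁J₀ : B X₁ (J X₀) = 0)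
    (hg : ∀ X ∈ ({X₀, X₁} : Set V), ∀ T, B X X * g T = B X T * g X - B X (J T) * g (J X)) :
    g = 0 := by
  have hJJ : J (J X₀) = -X₀ := by simpa using congr($hJ X₀)
  set ξ := g X₀ • X₀ + g (J X₀) • J X₀
  have hJξ : J ξ = g X₀ • J X₀ - g (J X₀) • X₀ := by simp [ξ, hJJ, sub_eq_add_neg]
  have hgξ : g ξ = 0 := by
    have h := hg X₁ (by simp) ξ
    simp only [hJξ, ξ, map_add, map_sub, map_smul, smul_eq_mul, h₁₀, h₁J₀, mul_zero,
      add_zero, sub_zero, zero_mul] at h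
    exact (mul_eq_zero.1 h).resolve_left h₁
  have hsq : g X₀ ^ 2 + g (J X₀) ^ 2 = 0 := by
    have h := hg X₀ (by simp) ξ
    simp only [hgξ, hJξ, ξ, map_add, map_sub, map_smul, smul_eq_mul, mul_zero] at h
    exact (mul_eq_zero.1 (by linear_combination -h)).resolve_left h₀
  have hgX₀ : g X₀ = 0 := by nlinarith [sq_nonneg (g X₀), sq_nonneg (g (J X₀))]
  have hgJX₀ : g (J X₀) = 0 := by nlinarith [sq_nonneg (g X₀), sq_nonneg (g (J X₀))]
  ext T
  have h := hg X₀ (by simp) T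
  rw [hgX₀, hgJX₀] at h
  simpa [h₀] using h

variable (B J) in
theorem exists_pair_mem_ker {E : Type*} [FiniteDimensional ℝ V] [AddCommGroup E] [Module ℝ E]
    (f : V →ₗ[ℝ] E) (h : finrank ℝ (range f) + 2 < finrank ℝ V) :
    ∃ X₀ X₁, X₀ ≠ 0 ∧ X₁ ≠ 0 ∧ f X₀ = 0 ∧ f X₁ = 0 ∧ B X₁ X₀ = 0 ∧ B X₁ (J X₀) = 0 := by
  have h' : finrank ℝ (range f) + finrank ℝ (ℝ × ℝ) < finrank ℝ V := by simpa using h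
  obtain ⟨X₀, hX₀, hfX₀, -⟩ := exists_ne_zero_apply_eq_zero_of_finrank_lt f 0 h'
  obtain ⟨X₁, hX₁, hfX₁, hℓ⟩ :=
    exists_ne_zero_apply_eq_zero_of_finrank_lt f ((B.flip X₀).prod (B.flip (J X₀))) h'
  exact ⟨X₀, X₁, hX₀, hX₁, hfX₀, hfX₁, Prod.mk_eq_zero.1 hℓ⟩

end LinearMap.BilinForm

section Projection

variable {L : Type*} [AddCommGroup L] [Module ℝ L]

/-- The projection of `L` onto `w^⊥` along `v`, for `B v w ≠ 0`. -/
noncomputable def projAlong (B : LinearMap.BilinForm ℝ L) (w v : L) : L →ₗ[ℝ] L :=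
  LinearMap.id - ((B v w)⁻¹ • B.flip w).smulRight v

variable {B : LinearMap.BilinForm ℝ L} {w v : L}

theorem projAlong_apply (x : L) : projAlong B w v x = x - (B x w / B v w) • v := by
  simp [projAlong, div_eq_inv_mul]

theorem projAlong_apply_right (h : B v w ≠ 0) (x : L) : B (projAlong B w v x) w = 0 := by
  simp [projAlong_apply, h]

theorem projAlong_self (h : B v w ≠ 0) : projAlong B w v v = 0 := by
  simp [projAlong_apply, h]

theorem sub_projAlong_mem_span (x : L) : x - projAlong B w v x ∈ Submodule.span ℝ {v} := by
  simpa [projAlong_apply] using Submodule.smul_mem _ _ (Submodule.mem_span_singleton_self v)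

theorem eq_smul_of_projAlong_eq_zero {x : L} (hx : projAlong B w v x = 0) :
    x = (B x w / B v w) • v := by
  rwa [projAlong_apply, sub_eq_zero] at hx

theorem eq_zero_of_apply_add_apply_eq_zero (hpos : ∀ x, B x w = 0 → x ≠ 0 → 0 < B x x)
    {a b : L} (ha : B a w = 0) (hb : B b w = 0) (h : B a a + B b b = 0) : a = 0 ∧ b = 0 := by
  have hnonneg : ∀ x, B x w = 0 → 0 ≤ B x x := fun x hx =>
    (eq_or_ne x 0).elim (fun h => by simp [h]) fun h => (hpos x hx h).le
  constructor <;> by_contra hne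
  · linarith [hpos a ha hne, hnonneg b hb]
  · linarith [hpos b hb hne, hnonneg a ha]

end Projection

section Setting

variable {V L : Type*} [AddCommGroup V] [Module ℝ V] [AddCommGroup L] [Module ℝ L]

noncomputable def projβ (β : V →ₗ[ℝ] V →ₗ[ℝ] L × L) (BL : LinearMap.BilinForm ℝ L) (w v : L) :
    V →ₗ[ℝ] V →ₗ[ℝ] L × L :=
  β.compr₂ ((projAlong BL w v).prodMap (projAlong BL w v))

variable {BV : LinearMap.BilinForm ℝ V} {J : V →ₗ[ℝ] V} {BL : LinearMap.BilinForm ℝ L} {w v : L}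
  {α : V →ₗ[ℝ] V →ₗ[ℝ] L} {β : V →ₗ[ℝ] V →ₗ[ℝ] L × L}

@[simp]
theorem projβ_apply (X Y : V) :
    projβ β BL w v X Y = (projAlong BL w v (β X Y).1, projAlong BL w v (β X Y).2) :=
  rfl

theorem β_apply_swap (hαsymm : ∀ X Y : V, α X Y = α Y X)
    (hβ : ∀ X Y : V, β X Y = (α X Y + α (J X) (J Y), α X (J Y) - α (J X) Y)) (X Y : V) :
    β Y X = ((β X Y).1, -(β X Y).2) := by
  simp only [hβ, hαsymm Y X, hαsymm (J Y) (J X), hαsymm Y (J X), hαsymm (J Y) X, neg_sub]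

theorem β_snd_eq_fst_J (hJ : J ∘ₗ J = -LinearMap.id)
    (hβ : ∀ X Y : V, β X Y = (α X Y + α (J X) (J Y), α X (J Y) - α (J X) Y)) (X Y : V) :
    (β X Y).2 = (β X (J Y)).1 := by
  simp [hβ, show J (J Y) = -Y by simpa using congr($hJ Y), sub_eq_add_neg]

theorem β_fst_apply_w (hJiso : ∀ X Y : V, BV (J X) (J Y) = BV X Y)
    (hαw : ∀ X Y : V, BL (α X Y) w = -(BV X Y))
    (hβ : ∀ X Y : V, β X Y = (α X Y + α (J X) (J Y), α X (J Y) - α (J X) Y)) (X Y : V) :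
    BL (β X Y).1 w = -2 * BV X Y := by
  rw [hβ, map_add, LinearMap.add_apply, hαw, hαw, hJiso]
  ring

theorem apply_projβ_apply_projβ {Bw : LinearMap.BilinForm ℝ (L × L)} (hBw : Bw.IsSymm)
    {S : Submodule ℝ (L × L)} (hβS : ∀ X Y, β X Y ∈ S)
    (hrad : (Submodule.span ℝ {v}).prod (Submodule.span ℝ {v}) ≤ S ⊓ Bw.orthogonal S)
    (x y z t : V) : Bw (projβ β BL w v x y) (projβ β BL w v z t) = Bw (β x y) (β z t) := by
  have hmem : ∀ c : L × L,
      c - (projAlong BL w v).prodMap (projAlong BL w v) c ∈ S ⊓ Bw.orthogonal S :=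
    fun c => hrad ⟨sub_projAlong_mem_span c.1, sub_projAlong_mem_span c.2⟩
  simpa using LinearMap.BilinForm.apply_sub_sub_of_mem_radical hBw (hβS x y) (hβS z t)
    (hmem (β x y)) (hmem (β z t))

theorem projβ_eq_zero_of_apply_swap_eq_zero (hpos : ∀ x, BL x w = 0 → x ≠ 0 → 0 < BL x x)
    (hvw : BL v w ≠ 0) {Bw : LinearMap.BilinForm ℝ (L × L)}
    (hBw : ∀ a b : L × L, Bw a b = BL a.1 b.1 - BL a.2 b.2) (hαsymm : ∀ X Y : V, α X Y = α Y X)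
    (hβ : ∀ X Y : V, β X Y = (α X Y + α (J X) (J Y), α X (J Y) - α (J X) Y)) (u t : V)
    (h : Bw (projβ β BL w v t u) (projβ β BL w v u t) = 0) :
    projβ β BL w v u t = 0 := by
  simp only [projβ_apply] at h ⊢
  rw [β_apply_swap hαsymm hβ u t, hBw, map_neg, map_neg, LinearMap.neg_apply, sub_neg_eq_add] at h
  obtain ⟨h₁, h₂⟩ := eq_zero_of_apply_add_apply_eq_zero hpos (projAlong_apply_right hvw _)
    (projAlong_apply_right hvw _) h
  exact Prod.ext h₁ h₂

theorem finrank_range_projβ_flip_add_two_lt [FiniteDimensional ℝ L] (hvw : BL v w ≠ 0)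
    (hv0 : v ≠ 0) (hJ : J ∘ₗ J = -LinearMap.id)
    (hβ : ∀ X Y : V, β X Y = (α X Y + α (J X) (J Y), α X (J Y) - α (J X) Y))
    {S : Submodule ℝ (L × L)} (hβS : ∀ X Y, β X Y ∈ S) (hvS : (v, 0) ∈ S) {n : ℕ}
    (hdV : finrank ℝ V = 2 * n) (hsn : finrank ℝ (S.map (LinearMap.fst ℝ L L)) ≤ n - 1) (Y₀ : V) :
    finrank ℝ (range ((projβ β BL w v).flip Y₀)) + 2 < finrank ℝ V := by
  set N := (S.map (LinearMap.fst ℝ L L)).map (projAlong BL w v)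
  have hN : finrank ℝ N < finrank ℝ (S.map (LinearMap.fst ℝ L L)) :=
    Submodule.finrank_map_lt_of_mem_ker ⟨(v, 0), hvS, rfl⟩ hv0 (projAlong_self hvw)
  have hfst : ∀ X Y, projAlong BL w v (β X Y).1 ∈ N := fun X Y =>
    Submodule.mem_map_of_mem (Submodule.mem_map_of_mem (hβS X Y))
  have hrange : range ((projβ β BL w v).flip Y₀) ≤ N.prod N := by
    rintro _ ⟨X, rfl⟩
    refine ⟨hfst X Y₀, ?_⟩
    simpa only [SetLike.mem_coe, flip_apply, projβ_apply, β_snd_eq_fst_J hJ hβ]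
      using hfst X (J Y₀)
  have := (Submodule.finrank_mono hrange).trans (N.finrank_prod_le N)
  omega

theorem β_eq_smul_of_projβ_eq_zero (hJ : J ∘ₗ J = -LinearMap.id)
    (hJiso : ∀ X Y : V, BV (J X) (J Y) = BV X Y) (hαw : ∀ X Y : V, BL (α X Y) w = -(BV X Y))
    (hβ : ∀ X Y : V, β X Y = (α X Y + α (J X) (J Y), α X (J Y) - α (J X) Y)) {X : V}
    (hX : projβ β BL w v X = 0) (Y : V) :
    β X Y = ((-2 / BL v w * BV X Y) • v, (-2 / BL v w * BV X (J Y)) • v) := by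
  have h := congr($hX Y)
  simp only [projβ_apply, LinearMap.zero_apply, Prod.mk_eq_zero] at h
  refine Prod.ext ?_ ?_
  · rw [eq_smul_of_projAlong_eq_zero h.1, β_fst_apply_w hJiso hαw hβ]
    ring_nf
  · rw [eq_smul_of_projAlong_eq_zero h.2, β_snd_eq_fst_J hJ hβ, β_fst_apply_w hJiso hαw hβ]
    ring_nf

theorem mul_eq_sub_of_compat (hBVsymm : BV.IsSymm) (hJ : J ∘ₗ J = -LinearMap.id)
    (hJiso : ∀ X Y : V, BV (J X) (J Y) = BV X Y) {Bw : LinearMap.BilinForm ℝ (L × L)}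
    (hBw : ∀ a b : L × L, Bw a b = BL a.1 b.1 - BL a.2 b.2)
    {γ : V → V → L × L} (hγ : ∀ X Y : V, γ X Y = (α X Y, α X (J Y)))
    (hcompat : ∀ X Y Z T : V, Bw (β X Y) (γ Z T) = Bw (β X T) (γ Z Y)) {X : V} {c : ℝ}
    (hc : c ≠ 0) (hX : ∀ Y, β X Y = ((c * BV X Y) • v, (c * BV X (J Y)) • v)) (Z T : V) :
    BV X X * BL v (α Z T) = BV X T * BL v (α Z X) - BV X (J T) * BL v (α Z (J X)) := by
  have h := hcompat X X Z T
  simp only [hBw, hX, hγ, map_smul, LinearMap.smul_apply, smul_eq_mul,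
    LinearMap.BilinForm.apply_J_self_eq_zero hBVsymm hJ hJiso X] at h
  refine mul_left_cancel₀ hc ?_
  linear_combination h

end Setting

theorem stmt_12_general (n : ℕ) (V L : Type*) [AddCommGroup V] [Module ℝ V] [FiniteDimensional ℝ V]
    [AddCommGroup L] [Module ℝ L] [FiniteDimensional ℝ L]
    (hdV : Module.finrank ℝ V = 2 * n)
    (BV : LinearMap.BilinForm ℝ V) (hVsymm : BV.IsSymm)
    (hVpos : ∀ X : V, X ≠ 0 → 0 < BV X X)
    (J : V →ₗ[ℝ] V) (hJ : J ∘ₗ J = -LinearMap.id)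
    (hJiso : ∀ X Y : V, BV (J X) (J Y) = BV X Y)
    (BL : LinearMap.BilinForm ℝ L) (hLsymm : BL.IsSymm)
    (w : L)
    (hLor : ∀ x : L, BL x w = 0 → x ≠ 0 → 0 < BL x x)
    (α : V →ₗ[ℝ] V →ₗ[ℝ] L) (hαsymm : ∀ X Y : V, α X Y = α Y X)
    (hαw : ∀ X Y : V, BL (α X Y) w = -(BV X Y))
    (β : V →ₗ[ℝ] V →ₗ[ℝ] L × L)
    (hβ : ∀ X Y : V, β X Y = (α X Y + α (J X) (J Y), α X (J Y) - α (J X) Y))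
    (Bw : LinearMap.BilinForm ℝ (L × L))
    (hBw : ∀ a b : L × L, Bw a b = BL a.1 b.1 - BL a.2 b.2)
    (hflat : ∀ X Y Z T : V, Bw (β X Y) (β Z T) = Bw (β X T) (β Z Y))
    (γ : V → V → L × L) (hγ : ∀ X Y : V, γ X Y = (α X Y, α X (J Y)))
    (hcompat : ∀ X Y Z T : V, Bw (β X Y) (γ Z T) = Bw (β X T) (γ Z Y))
    (Sβ : Submodule ℝ (L × L))
    (hSβ : Sβ = Submodule.span ℝ {z : L × L | ∃ X Y : V, z = β X Y})
    (s : ℕ) (hs : s = Module.finrank ℝ (Submodule.map (LinearMap.fst ℝ L L) Sβ))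
    (hsn : s ≤ n - 1)
    (v : L) (hv0 : v ≠ 0) (hvlight : BL v v = 0)
    (hvrad : Sβ ⊓ Bw.orthogonal Sβ =
      (Submodule.span ℝ {v}).prod (Submodule.span ℝ {v})) :
    ∀ X Y : V, BL (α X Y) v = 0 := by
  have hvw : BL v w ≠ 0 := fun h => (hLor v h hv0).ne' hvlight
  have hBwsymm : Bw.IsSymm := ⟨fun a b => by simp [hBw, hLsymm.eq]⟩
  have hβS : ∀ X Y, β X Y ∈ Sβ := fun X Y => hSβ ▸ Submodule.subset_span ⟨X, Y, rfl⟩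
  have hvS : (v, 0) ∈ Sβ := (hvrad.ge (show (v, (0 : L)) ∈ (Submodule.span ℝ {v}).prod _ from
    ⟨Submodule.mem_span_singleton_self v, Submodule.zero_mem _⟩)).1
  obtain ⟨Y₀, hY₀⟩ := exists_ker_flip_le_ker _ Bw
    (fun x y z t => by simp only [apply_projβ_apply_projβ hBwsymm hβS hvrad.ge, hflat x y z t])
    (projβ_eq_zero_of_apply_swap_eq_zero hLor hvw hBw hαsymm hβ)
  obtain ⟨X₀, X₁, hX₀, hX₁, hfX₀, hfX₁, h₁₀, h₁J₀⟩ := BV.exists_pair_mem_ker J _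
    (finrank_range_projβ_flip_add_two_lt hvw hv0 hJ hβ hβS hvS hdV (hs ▸ hsn) Y₀)
  intro Z T
  rw [hLsymm.eq]
  refine congr_fun (BV.eq_zero_of_forall_mul_eq_sub (g := fun T => BL v (α Z T)) hJ
    (hVpos X₀ hX₀).ne' (hVpos X₁ hX₁).ne' h₁₀ h₁J₀ ?_) T
  rintro X (rfl | rfl) <;>
    exact mul_eq_sub_of_compat hVsymm hJ hJiso hBw hγ hcompat (div_ne_zero (by norm_num) hvw)
      (β_eq_smul_of_projβ_eq_zero hJ hJiso hαw hβ (hY₀ ‹_›)) Z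

theorem stmt_12 (n : ℕ) (V L : Type*) [AddCommGroup V] [Module ℝ V] [FiniteDimensional ℝ V]
    [AddCommGroup L] [Module ℝ L] [FiniteDimensional ℝ L]
    (hdV : Module.finrank ℝ V = 2 * n)
    (BV : LinearMap.BilinForm ℝ V) (hVsymm : BV.IsSymm)
    (hVpos : ∀ X : V, X ≠ 0 → 0 < BV X X)
    (J : V →ₗ[ℝ] V) (hJ : J ∘ₗ J = -LinearMap.id)
    (hJiso : ∀ X Y : V, BV (J X) (J Y) = BV X Y)
    (BL : LinearMap.BilinForm ℝ L) (hLsymm : BL.IsSymm)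
    (w : L) (hw : BL w w = -1)
    (hLor : ∀ x : L, BL x w = 0 → x ≠ 0 → 0 < BL x x)
    (α : V →ₗ[ℝ] V →ₗ[ℝ] L) (hαsymm : ∀ X Y : V, α X Y = α Y X)
    (hαw : ∀ X Y : V, BL (α X Y) w = -(BV X Y))
    (β : V →ₗ[ℝ] V →ₗ[ℝ] L × L)
    (hβ : ∀ X Y : V, β X Y = (α X Y + α (J X) (J Y), α X (J Y) - α (J X) Y))
    (Bw : LinearMap.BilinForm ℝ (L × L))
    (hBw : ∀ a b : L × L, Bw a b = BL a.1 b.1 - BL a.2 b.2)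
    (hflat : ∀ X Y Z T : V, Bw (β X Y) (β Z T) = Bw (β X T) (β Z Y))
    (γ : V → V → L × L) (hγ : ∀ X Y : V, γ X Y = (α X Y, α X (J Y)))
    (hcompat : ∀ X Y Z T : V, Bw (β X Y) (γ Z T) = Bw (β X T) (γ Z Y))
    (Sβ : Submodule ℝ (L × L))
    (hSβ : Sβ = Submodule.span ℝ {z : L × L | ∃ X Y : V, z = β X Y})
    (hdeg : Sβ ⊓ Bw.orthogonal Sβ ≠ ⊥)
    (s : ℕ) (hs : s = Module.finrank ℝ (Submodule.map (LinearMap.fst ℝ L L) Sβ))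
    (hsn : s ≤ n - 1)
    (v : L) (hv0 : v ≠ 0) (hvlight : BL v v = 0)
    (hvrad : Sβ ⊓ Bw.orthogonal Sβ =
      (Submodule.span ℝ {v}).prod (Submodule.span ℝ {v})) :
    ∀ X Y : V, BL (α X Y) v = 0 :=
  stmt_12_general n V L hdV BV hVsymm hVpos J hJ hJiso BL hLsymm w hLor α hαsymm hαw β hβ Bw hBw
    hflat γ hγ hcompat Sβ hSβ s hs hsn v hv0 hvlight hvrad
end

section
/- Let f : M^{2n} → ℍ^{2n+p} be an isometric immersion of a Kaehler manifold and g = i ∘ f : M → 𝕃^{2n+p+1} the composition with the inclusion of hyperbolic space into Lorentzian space, so that α^g(X,Y) = i_* α^f(X,Y) + ⟨X,Y⟩ g. Define at x ∈ M: γ(X,Y) = (α^g(X,Y), α^g(X,JY)) and β(X,Y) = γ(X,Y) + γ(JX,JY), with the inner product ⟨⟨(ξ,ξ̄),(η,η̄)⟩⟩ = ⟨ξ,η⟩ − ⟨ξ̄,η̄⟩ on N_gM(x) ⊕ N_gM(x). Then β is flat and ⟨⟨β(X,Y),γ(Z,T)⟩⟩ = ⟨⟨β(X,T),γ(Z,Y)⟩⟩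 for all X,Y,Z,T ∈ T_xM. -/
/-- Pointwise algebraic content of Proposition (flatforms): for an isometric immersion
g = i ∘ f of a Kaehler manifold into Lorentzian space, at a point the Gauss equation
and the Kaehler curvature identity R(X,Y)J = JR(X,Y) imply that β is flat and
⟨⟨β(X,Y),γ(Z,T)⟩⟩ = ⟨⟨β(X,T),γ(Z,Y)⟩⟩. -/
theorem stmt_18 (V W : Type*) [AddCommGroup V] [Module ℝ V] [AddCommGroup W] [Module ℝ W]
    (BT : LinearMap.BilinForm ℝ V) (hTsymm : BT.IsSymm)
    (BN : LinearMap.BilinForm ℝ W) (hNsymm : BN.IsSymm)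
    (J : V →ₗ[ℝ] V) (hJ : J ∘ₗ J = -LinearMap.id)
    (hJiso : ∀ X Y : V, BT (J X) (J Y) = BT X Y)
    -- the second fundamental form of g = i ∘ f decomposes as α^g = i_*α^f + ⟨X,Y⟩ g
    (g0 : W) (hg0 : BN g0 g0 = -1)
    (αf : V →ₗ[ℝ] V →ₗ[ℝ] W) (hαfperp : ∀ X Y : V, BN (αf X Y) g0 = 0)
    (αg : V →ₗ[ℝ] V →ₗ[ℝ] W)
    (hαg : ∀ X Y : V, αg X Y = αf X Y + (BT X Y) • g0)
    (hαsymm : ∀ X Y : V, αg X Y = αg Y X)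
    -- curvature of the Kaehler manifold: Gauss equation and R(X,Y)JZ = JR(X,Y)Z
    (R : V →ₗ[ℝ] V →ₗ[ℝ] V →ₗ[ℝ] V)
    (hGauss : ∀ X Z Y T : V,
      BT (R X Z Y) T = BN (αg X Y) (αg Z T) - BN (αg X T) (αg Z Y))
    (hKaehler : ∀ X Y Z : V, R X Y (J Z) = J (R X Y Z))
    (Bw : LinearMap.BilinForm ℝ (W × W))
    (hBw : ∀ a b : W × W, Bw a b = BN a.1 b.1 - BN a.2 b.2)
    (γ : V → V → W × W) (hγ : ∀ X Y : V, γ X Y = (αg X Y, αg X (J Y)))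
    (β : V → V → W × W) (hβ : ∀ X Y : V, β X Y = γ X Y + γ (J X) (J Y)) :
    (∀ X Y Z T : V, Bw (β X Y) (β Z T) = Bw (β X T) (β Z Y)) ∧
    (∀ X Y Z T : V, Bw (β X Y) (γ Z T) = Bw (β X T) (γ Z Y)) := by
  have hJJ : ∀ v : V, J (J v) = -v := by
    intro v
    have := LinearMap.congr_fun hJ v
    simpa using this
  have hBTJ : ∀ a d : V, BT (J a) d = - BT a (J d) := by
    intro a d
    have h := hJiso a (J d)
    rw [hJJ, map_neg] at h
    linarith
  -- S(A,C,JB,JD) = S(A,C,B,D)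
  have SK : ∀ A C B D : V, BT (R A C (J B)) (J D) = BT (R A C B) D := by
    intro A C B D; rw [hKaehler]; exact hJiso _ _
  have SK2 : ∀ A C B D : V, BT (R A C (J B)) D = - BT (R A C B) (J D) := by
    intro A C B D; rw [hKaehler]; exact hBTJ _ _
  -- L1 : flatness of γ
  have L1 : ∀ A B C D : V,
      BN (αg A B) (αg C D) - BN (αg A (J B)) (αg C (J D))
        = BN (αg A D) (αg C B) - BN (αg A (J D)) (αg C (J B)) := by
    intro A B C D
    have h1 := hGauss A C B D
    have h2 := hGauss A C (J B) (J D)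
    have h3 := SK A C B D
    linarith
  -- L2
  have L2 : ∀ A B C D : V,
      BN (αg A (J B)) (αg C D) + BN (αg A B) (αg C (J D))
        = BN (αg A (J D)) (αg C B) + BN (αg A D) (αg C (J B)) := by
    intro A B C D
    have h1 := hGauss A C (J B) D
    have h2 := hGauss A C B (J D)
    have h3 := SK2 A C B D
    linarith
  constructor
  · intro X Y Z T
    have h1 := L1 X Y Z T
    have h2 := L2 (J X) Y Z T
    -- term2 : via BN symmetry
    have h3 := L2 (J Z) T X Y
    have h4 := L2 (J X) Y (J Z) (J T)
    rw [hJJ] at h4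
    have h4' : BN (αg (J X) (J Y)) (αg (J Z) (J T)) - BN (αg (J X) Y) (αg (J Z) T)
        = BN (αg (J X) (J T)) (αg (J Z) (J Y)) - BN (αg (J X) T) (αg (J Z) Y) := by
      simp only [map_neg, LinearMap.neg_apply] at h4
      linarith
    have s1 := hNsymm.eq (αg (J Z) (J T)) (αg X Y)
    have s2 := hNsymm.eq (αg (J Z) T) (αg X (J Y))
    have s3 := hNsymm.eq (αg (J Z) (J Y)) (αg X T)
    have s4 := hNsymm.eq (αg (J Z) Y) (αg X (J T))
    simp only [hβ, hγ, hBw, Prod.fst_add, Prod.snd_add, hJJ, map_add, map_neg,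
      LinearMap.add_apply, LinearMap.neg_apply]
    linarith
  · intro X Y Z T
    have h1 := L1 X Y Z T
    have h2 := L2 (J X) Y Z T
    simp only [hβ, hγ, hBw, Prod.fst_add, Prod.snd_add, hJJ, map_add, map_neg,
      LinearMap.add_apply, LinearMap.neg_apply]
    linarith
end
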